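/- arXiv:1005.0822 — 6 statements merged into one kernel-verified Lean document; each statement's English description precedes it below -/
import Mathlib

section
/- The convex cone Q(ℂ⟨X⟩) + C_cyc^h is closed in the real vector space ℂ⟨X⟩^h with its finest locally convex topology; equivalently, for every m ∈ ℕ the intersection ℂ⟨X⟩^h_{≤m} ∩ (Q(ℂ⟨X⟩) + C_cyc^h) is a closed subset of the finite-dimensional real vector space ℂ⟨X⟩^h_{≤m}. -/
open scoped ComplexOrder

noncomputable section

/-- The free `*`-algebra `ℂ⟨X⟩` on a set `X` of self-adjoint variables. -/
abbrev FA (X : Type) : Type := FreeAlgebra ℂ X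

/-- Coefficients of a non-commutative polynomial, indexed by words. -/
def coefficient {X : Type} (P : FA X) : FreeMonoid X →₀ ℂ :=
  (FreeAlgebra.equivMonoidAlgebraFreeMonoid P).coeff

/-- The involution on `ℂ⟨X⟩` fixing the variables, reversing words and
conjugating coefficients. -/
def cstar {X : Type} (P : FA X) : FA X :=
  star <| (FreeAlgebra.equivMonoidAlgebraFreeMonoid (R := ℂ) (X := X)).symm <| MonoidAlgebra.ofCoeff <|
    Finsupp.mapRange (starRingEnd ℂ) (map_zero _) (coefficient P)

/-- The hermitian elements `ℂ⟨X⟩^h`. -/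
def herm (X : Type) : Set (FA X) := {P | cstar P = P}

/-- Polynomials of degree at most `m`. -/
def degLE (X : Type) (m : ℕ) : Set (FA X) :=
  {P | ∀ w ∈ (coefficient P).support, (FreeMonoid.length w) ≤ m}

/-- The convex cone `Q(ℂ⟨X⟩)` of sums of hermitian squares. -/
def Qcone (X : Type) : Set (FA X) :=
  {x | ∃ (m : ℕ) (P : Fin m → FA X), x = ∑ i, cstar (P i) * P i}

/-- The span `C_cyc` of all commutators. -/
def Ccyc (X : Type) : Submodule ℂ (FA X) :=
  Submodule.span ℂ {x | ∃ P Q : FA X, x = P * Q - Q * P}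

/-- The hermitian part `C_cyc^h`. -/
def CcycH (X : Type) : Set (FA X) := {P | P ∈ Ccyc X ∧ cstar P = P}

/-- The ideal `J_k` of polynomials vanishing at every tuple of self-adjoint
complex `k×k` matrices. -/
def Jset (X : Type) (k : ℕ) : Set (FA X) :=
  {P | ∀ a : X → Matrix (Fin k) (Fin k) ℂ, (∀ i, IsSelfAdjoint (a i)) →
    FreeAlgebra.lift ℂ a P = 0}

/-- The hermitian part `J_k^h`. -/
def JsetH (X : Type) (k : ℕ) : Set (FA X) := {P | P ∈ Jset X k ∧ cstar P = P}

/-- The cone `Q(ℂ⟨X⟩) + C_cyc^h + J_k^h`. -/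
def coneQCJ (X : Type) (k : ℕ) : Set (FA X) :=
  {x | ∃ q ∈ Qcone X, ∃ c ∈ CcycH X, ∃ j ∈ JsetH X k, x = q + c + j}

/-- The cone `Q(ℂ⟨X⟩) + C_cyc^h`. -/
def coneQC (X : Type) : Set (FA X) :=
  {x | ∃ q ∈ Qcone X, ∃ c ∈ CcycH X, x = q + c}

/-!
If `Σ pᵢ* pᵢ + c` with `c ∈ C_cyc` has degree `≤ m`, every `pᵢ` has degree `≤ m / 2`; if
`Σ pᵢ* pᵢ ∈ C_cyc`, all `pᵢ` vanish. For both, let `Xᵢ` act on the Fock space truncated at word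
length `D` by `t • (aᵢ + aᵢ*)`, with `aᵢ` the creation operator and `t` a formal variable.
Commutators have traceless `t`-coefficients. If `k` is largest such that the `t^k`-coefficients
`Uᵢ` of the `pᵢ` are not all zero, the `t^(2k)`-coefficient of `Σ pᵢ* pᵢ + c` has trace
`Σ ‖Uᵢ‖² > 0`, so `2k` is at most the degree (resp. no such `k` exists); and applying the `Uᵢ`
to the vacuum shows that the `pᵢ` have no words longer than `k`.

Consequently, in coordinates on the words of length `≤ m`, the degree-`≤ m` part of the cone
is the image of (positive semidefinite Gram matrices on words of length `≤ m / 2`) ×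
(coordinates of `C_cyc^h`) under a linear map that vanishes on this closed cone only at `0`.
Such an image is closed, since the map is bounded below on the compact unit sphere of the cone.
-/

instance FreeMonoid.instDecidableEq {α : Type*} [DecidableEq α] : DecidableEq (FreeMonoid α) :=
  inferInstanceAs (DecidableEq (List α))

theorem FreeMonoid.length_star {α : Type*} (w : FreeMonoid α) : (star w).length = w.length :=
  List.length_reverse

namespace FreeAlgebra

variable {R : Type*} [CommSemiring R] {X : Type*}

theorem basisFreeMonoid_apply (w : FreeMonoid X) :
    basisFreeMonoid R X w = FreeMonoid.lift (ι R) w := by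
  simp [basisFreeMonoid, equivMonoidAlgebraFreeMonoid]

theorem basisFreeMonoid_mul (u v : FreeMonoid X) :
    basisFreeMonoid R X (u * v) = basisFreeMonoid R X u * basisFreeMonoid R X v := by
  simp only [basisFreeMonoid_apply, map_mul]

theorem lift_basisFreeMonoid {A : Type*} [Semiring A] [Algebra R A] (f : X → A)
    (w : FreeMonoid X) : lift R f (basisFreeMonoid R X w) = FreeMonoid.lift f w := by
  rw [basisFreeMonoid_apply]
  induction w using FreeMonoid.inductionOn' <;> simp_all

theorem star_basisFreeMonoid (w : FreeMonoid X) :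
    star (basisFreeMonoid R X w) = basisFreeMonoid R X (star w) := by
  rw [basisFreeMonoid_apply, basisFreeMonoid_apply]
  induction w using FreeMonoid.inductionOn' <;> simp_all

theorem star_smul_eq_smul_star (r : R) (x : FreeAlgebra R X) : star (r • x) = r • star x :=
  congrArg MulOpposite.unop (map_smul (starHom (R := R) (X := X)) r x)

theorem basisFreeMonoid_repr_star (x : FreeAlgebra R X) :
    (basisFreeMonoid R X).repr (star x) =
      Finsupp.mapDomain star ((basisFreeMonoid R X).repr x) := by
  conv_lhs => rw [← (basisFreeMonoid R X).linearCombination_repr x]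
  simp [Finsupp.linearCombination_apply, Finsupp.sum, star_sum, star_smul_eq_smul_star,
    star_basisFreeMonoid, Finsupp.mapDomain]

end FreeAlgebra

section ClosedCone

open Metric Set

variable {E F : Type*} [NormedAddCommGroup E] [NormedSpace ℝ E] [FiniteDimensional ℝ E]
  [NormedAddCommGroup F] [NormedSpace ℝ F] (f : E →ₗ[ℝ] F) {C : Set E}

theorem LinearMap.exists_norm_le_mul_norm_of_cone (hC : IsClosed C)
    (hsmul : ∀ t : ℝ, 0 < t → ∀ x ∈ C, t • x ∈ C) (hker : ∀ x ∈ C, f x = 0 → x = 0) :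
    ∃ K, 0 ≤ K ∧ ∀ x ∈ C, ‖x‖ ≤ K * ‖f x‖ := by
  have normalize : ∀ x ∈ C, x ≠ 0 → ‖x‖⁻¹ • x ∈ C ∩ sphere 0 1 := fun x hx hx0 =>
    ⟨hsmul _ (by positivity) x hx, by simp [norm_smul, hx0]⟩
  rcases (C ∩ sphere (0 : E) 1).eq_empty_or_nonempty with hS | hS
  · refine ⟨0, le_rfl, fun x hx => ?_⟩
    by_cases hx0 : x = 0
    · simp [hx0]
    · simpa [hS] using normalize x hx hx0
  obtain ⟨x₀, ⟨hx₀, hx₀1⟩, hmin⟩ := ((isCompact_sphere 0 1).inter_left hC).exists_isMinOn hS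
    (continuous_norm.comp f.continuous_of_finiteDimensional).continuousOn
  have hpos : 0 < ‖f x₀‖ := norm_pos_iff.mpr fun h => by simp [hker x₀ hx₀ h] at hx₀1
  refine ⟨‖f x₀‖⁻¹, by positivity, fun x hx => ?_⟩
  by_cases hx0 : x = 0
  · simp [hx0]
  have : ‖f x₀‖ ≤ ‖f (‖x‖⁻¹ • x)‖ := hmin (normalize x hx hx0)
  rw [map_smul, norm_smul, norm_inv, norm_norm] at this
  rw [le_inv_mul_iff₀ hpos]
  rwa [le_inv_mul_iff₀ (norm_pos_iff.mpr hx0), mul_comm] at this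

theorem LinearMap.isClosed_image_of_cone (hC : IsClosed C)
    (hsmul : ∀ t : ℝ, 0 < t → ∀ x ∈ C, t • x ∈ C) (hker : ∀ x ∈ C, f x = 0 → x = 0) :
    IsClosed (f '' C) := by
  obtain ⟨K, hK0, hK⟩ := f.exists_norm_le_mul_norm_of_cone hC hsmul hker
  refine closure_subset_iff_isClosed.mp fun y hy => ?_
  have hcpt : IsCompact (f '' (C ∩ closedBall 0 (K * (‖y‖ + 1)))) :=
    ((isCompact_closedBall 0 _).inter_left hC).image f.continuous_of_finiteDimensional
  have hnear : ball y 1 ∩ f '' C ⊆ f '' (C ∩ closedBall 0 (K * (‖y‖ + 1))) := by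
    rintro _ ⟨hxy, x, hx, rfl⟩
    have : ‖f x‖ ≤ ‖y‖ + 1 := by
      have := norm_le_norm_add_norm_sub' (f x) y
      rw [mem_ball_iff_norm] at hxy
      linarith
    exact ⟨x, ⟨hx, mem_closedBall_zero_iff.mpr ((hK x hx).trans (by gcongr))⟩, rfl⟩
  exact image_mono inter_subset_left <| closure_minimal hnear hcpt.isClosed <|
    isOpen_ball.inter_closure ⟨mem_ball_self one_pos, hy⟩

end ClosedCone

open FreeAlgebra Matrix

theorem Matrix.isClosed_setOf_posSemidef {𝕜 n : Type*} [RCLike 𝕜] [Fintype n] :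
    IsClosed {A : Matrix n n 𝕜 | A.PosSemidef} := by
  simp only [posSemidef_iff_dotProduct_mulVec, Set.ofPred_and, Set.ofPred_forall]
  refine (isClosed_eq continuous_id.matrix_conjTranspose continuous_id).inter
    (isClosed_iInter fun x => isClosed_le continuous_const ?_)
  exact continuous_const.dotProduct (continuous_id.matrix_mulVec continuous_const)

open scoped MatrixOrder in
theorem Matrix.PosSemidef.exists_conjTranspose_mul_self_eq {𝕜 n : Type*} [RCLike 𝕜] [Fintype n]
    [DecidableEq n] {A : Matrix n n 𝕜} (hA : A.PosSemidef) : ∃ B : Matrix n n 𝕜, Bᴴ * B = A :=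
  ⟨CFC.sqrt A, by
    rw [← star_eq_conjTranspose, (CFC.sqrt_nonneg A).isSelfAdjoint.star_eq,
      CFC.sqrt_mul_sqrt_self A hA.nonneg]⟩

namespace NCPoly

section Coefficients

variable {X : Type}

theorem coefficient_eq_repr (P : FA X) : coefficient P = (basisFreeMonoid ℂ X).repr P := rfl

theorem coefficient_injective : Function.Injective (coefficient (X := X)) :=
  (basisFreeMonoid ℂ X).repr.injective

@[simp] theorem coefficient_add (P Q : FA X) :
    coefficient (P + Q) = coefficient P + coefficient Q :=
  (basisFreeMonoid ℂ X).repr.map_add P Q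

@[simp] theorem coefficient_smul (z : ℂ) (P : FA X) : coefficient (z • P) = z • coefficient P :=
  (basisFreeMonoid ℂ X).repr.map_smul z P

@[simp] theorem coefficient_zero : coefficient (0 : FA X) = 0 :=
  (basisFreeMonoid ℂ X).repr.map_zero

@[simp] theorem coefficient_sum {ι : Type*} (s : Finset ι) (P : ι → FA X) :
    coefficient (∑ i ∈ s, P i) = ∑ i ∈ s, coefficient (P i) :=
  map_sum (basisFreeMonoid ℂ X).repr P s

@[simp] theorem coefficient_basisFreeMonoid (w : FreeMonoid X) :
    coefficient (basisFreeMonoid ℂ X w) = Finsupp.single w 1 :=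
  (basisFreeMonoid ℂ X).repr_self w

theorem coefficient_cstar (P : FA X) (w : FreeMonoid X) :
    coefficient (cstar P) w = starRingEnd ℂ (coefficient P (star w)) := by
  rw [cstar, coefficient_eq_repr, basisFreeMonoid_repr_star, ← star_star w,
    Finsupp.mapDomain_apply star_injective, star_star]
  exact congrArg (· (star w)) ((basisFreeMonoid ℂ X).repr.apply_symm_apply _)

theorem cstar_add (P Q : FA X) : cstar (P + Q) = cstar P + cstar Q :=
  coefficient_injective <| Finsupp.ext fun w => by simp [coefficient_cstar]

theorem cstar_smul (z : ℂ) (P : FA X) : cstar (z • P) = starRingEnd ℂ z • cstar P :=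
  coefficient_injective <| Finsupp.ext fun w => by simp [coefficient_cstar]

theorem cstar_sum {ι : Type*} (s : Finset ι) (P : ι → FA X) :
    cstar (∑ i ∈ s, P i) = ∑ i ∈ s, cstar (P i) :=
  map_sum (AddMonoidHom.mk' cstar cstar_add) P s

theorem cstar_basisFreeMonoid (w : FreeMonoid X) :
    cstar (basisFreeMonoid ℂ X w) = basisFreeMonoid ℂ X (star w) :=
  coefficient_injective <| Finsupp.ext fun v => by
    classical
    simp [coefficient_cstar, Finsupp.single_apply, eq_star_iff_eq_star, eq_comm]

def degLESubmodule (X : Type) (D : ℕ) : Submodule ℂ (FA X) where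
  carrier := degLE X D
  add_mem' {P Q} hP hQ w hw := by
    classical
    rw [coefficient_add] at hw
    exact (Finset.mem_union.mp (Finsupp.support_add hw)).elim (hP w) (hQ w)
  zero_mem' w hw := by simp at hw
  smul_mem' z P hP w hw := by
    rw [coefficient_smul] at hw
    exact hP w (Finsupp.support_smul hw)

theorem mem_degLESubmodule {D : ℕ} {P : FA X} : P ∈ degLESubmodule X D ↔ P ∈ degLE X D :=
  Iff.rfl

theorem degLE_mono {D D' : ℕ} (h : D ≤ D') {P : FA X} (hP : P ∈ degLE X D) : P ∈ degLE X D' :=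
  fun w hw => (hP w hw).trans h

theorem basisFreeMonoid_mem_degLE {D : ℕ} {w : FreeMonoid X} (hw : w.length ≤ D) :
    basisFreeMonoid ℂ X w ∈ degLE X D := by
  intro v hv
  rw [coefficient_basisFreeMonoid] at hv
  rwa [Finset.mem_singleton.mp (Finsupp.support_single_subset hv)]

theorem exists_forall_mem_degLE {ι : Type*} [Finite ι] (P : ι → FA X) :
    ∃ D, ∀ i, P i ∈ degLE X D := by
  have := Fintype.ofFinite ι
  exact ⟨Finset.univ.sup fun i => (coefficient (P i)).support.sup FreeMonoid.length,
    fun i w hw => (Finset.le_sup (f := FreeMonoid.length) hw).trans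
      (Finset.le_sup (f := fun i => (coefficient (P i)).support.sup FreeMonoid.length)
        (Finset.mem_univ i))⟩

def CcycHSubmodule (X : Type) : Submodule ℝ (FA X) where
  carrier := CcycH X
  add_mem' {P Q} hP hQ := ⟨(Ccyc X).add_mem hP.1 hQ.1, by rw [cstar_add, hP.2, hQ.2]⟩
  zero_mem' := ⟨(Ccyc X).zero_mem, by simpa using cstar_smul 0 (0 : FA X)⟩
  smul_mem' r P hP := ⟨(Ccyc X).smul_of_tower_mem r hP.1, by
    rw [← Complex.coe_smul, cstar_smul, Complex.conj_ofReal, hP.2]⟩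

theorem sum_cstar_mul_self_mem_Qcone {ι : Type*} [Fintype ι] (P : ι → FA X) :
    ∑ i, cstar (P i) * P i ∈ Qcone X :=
  ⟨Fintype.card ι, P ∘ (Fintype.equivFin ι).symm,
    (Equiv.sum_comp (Fintype.equivFin ι).symm fun i => cstar (P i) * P i).symm⟩

end Coefficients

section Words

variable {X : Type}

abbrev Words (X : Type) (D : ℕ) : Type := {w : FreeMonoid X // w.length ≤ D}

instance (D : ℕ) [Finite X] : Finite (Words X D) := (List.finite_length_le X D).to_subtype

noncomputable instance (D : ℕ) [Finite X] : Fintype (Words X D) := Fintype.ofFinite _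

theorem sum_words_coefficient_smul [Finite X] {D : ℕ} {P : FA X} (hP : P ∈ degLE X D) :
    ∑ u : Words X D, coefficient P u.1 • basisFreeMonoid ℂ X u.1 = P := by
  classical
  refine coefficient_injective (Finsupp.ext fun w => ?_)
  simp only [coefficient_sum, coefficient_smul, coefficient_basisFreeMonoid,
    Finsupp.finsetSum_apply, Finsupp.smul_apply, Finsupp.single_apply, smul_eq_mul, mul_ite,
    mul_one, mul_zero]
  by_cases hw : w.length ≤ D
  · rw [Finset.sum_eq_single ⟨w, hw⟩ (fun u _ hu => if_neg fun h => hu (Subtype.ext h))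
      (fun h => absurd (Finset.mem_univ _) h), if_pos rfl]
  · rw [Finset.sum_eq_zero fun u _ => if_neg fun (h : u.1 = w) => hw (h ▸ u.2)]
    exact (Finsupp.notMem_support_iff.mp fun h => hw (hP w h)).symm

def coords (D : ℕ) : FA X →ₗ[ℂ] (Words X D → ℂ) :=
  LinearMap.pi fun u => Finsupp.lapply u.1 ∘ₗ (basisFreeMonoid ℂ X).repr.toLinearMap

@[simp] theorem coords_apply (D : ℕ) (P : FA X) (u : Words X D) :
    coords D P u = coefficient P u.1 :=
  rfl

theorem eq_of_coords_eq {D : ℕ} {P Q : FA X} (hP : P ∈ degLE X D) (hQ : Q ∈ degLE X D)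
    (h : coords D P = coords D Q) : P = Q := by
  refine coefficient_injective (Finsupp.ext fun w => ?_)
  by_cases hw : w.length ≤ D
  · exact congrFun h ⟨w, hw⟩
  · rw [Finsupp.notMem_support_iff.mp fun h => hw (hP w h),
      Finsupp.notMem_support_iff.mp fun h => hw (hQ w h)]

theorem coords_sum_words_smul [Finite X] {D : ℕ} (c : Words X D → ℂ) :
    coords D (∑ v, c v • basisFreeMonoid ℂ X v.1) = c := by
  classical
  ext u
  simp only [coords_apply, coefficient_sum, coefficient_smul, coefficient_basisFreeMonoid,
    Finsupp.finsetSum_apply, Finsupp.smul_apply, Finsupp.single_apply, smul_eq_mul, mul_ite,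
    mul_one, mul_zero, Subtype.val_inj, Finset.sum_ite_eq', Finset.mem_univ, if_true]

end Words

section Fock

variable {X : Type} [DecidableEq X] (D : ℕ)

-- `aᵢ + aᵢ*` on the Fock space truncated at word length `D`
def fockOp (i : X) : Matrix (Words X D) (Words X D) ℂ :=
  of fun u v => (if u.1 = .of i * v.1 then 1 else 0) + (if v.1 = .of i * u.1 then 1 else 0)

theorem fockOp_conjTranspose (i : X) : (fockOp D i)ᴴ = fockOp D i := by
  ext u v
  simp [fockOp, apply_ite (starRingEnd ℂ), add_comm]

variable [Finite X]

def fockWord : FreeMonoid X →* Matrix (Words X D) (Words X D) ℂ := FreeMonoid.lift (fockOp D)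

@[simp] theorem fockWord_of (i : X) : fockWord D (.of i) = fockOp D i := by
  simp [fockWord]

theorem fockWord_conjTranspose (w : FreeMonoid X) : (fockWord D w)ᴴ = fockWord D (star w) := by
  induction w using FreeMonoid.inductionOn' with
  | one => simp
  | of_mul i w ih =>
    rw [map_mul, conjTranspose_mul, ih, fockWord_of, fockOp_conjTranspose, star_mul,
      FreeMonoid.star_of, map_mul, fockWord_of]

def vacuum : Words X D := ⟨1, by simp⟩

theorem fockWord_apply_vacuum (w : FreeMonoid X) (u : Words X D) (h : w.length ≤ u.1.length) :
    fockWord D w u (vacuum D) = if u.1 = w then 1 else 0 := by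
  induction w using FreeMonoid.inductionOn' generalizing u with
  | one => simp [fockWord, one_apply, vacuum, Subtype.ext_iff]
  | of_mul i w ih =>
    simp only [FreeMonoid.length_mul, FreeMonoid.length_of] at h
    have hw : w.length ≤ D := by have := u.2; omega
    rw [map_mul, fockWord_of, mul_apply, Finset.sum_eq_single ⟨w, hw⟩ _ (by simp)]
    · rw [ih _ le_rfl, if_pos rfl, mul_one]
      have : w ≠ .of i * u.1 := fun e => by
        have := congrArg FreeMonoid.length e; simp at this; omega
      simp [fockOp, this]
    · intro x _ hx
      by_cases hA : fockOp D i u x = 0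
      · rw [hA, zero_mul]
      have hlen : w.length ≤ x.1.length := by
        by_cases h₁ : u.1 = .of i * x.1
        · have := congrArg FreeMonoid.length h₁; simp at this; omega
        by_cases h₂ : x.1 = .of i * u.1
        · have := congrArg FreeMonoid.length h₂; simp at this; omega
        simp [fockOp, h₁, h₂] at hA
      rw [ih x hlen, if_neg fun e => hx (Subtype.ext e), mul_zero]

def fockRep : FA X →ₐ[ℂ] Polynomial (Matrix (Words X D) (Words X D) ℂ) :=
  lift ℂ fun i => Polynomial.monomial 1 (fockOp D i)

theorem fockRep_basisFreeMonoid (w : FreeMonoid X) :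
    fockRep D (basisFreeMonoid ℂ X w) = Polynomial.monomial w.length (fockWord D w) := by
  rw [fockRep, lift_basisFreeMonoid]
  induction w using FreeMonoid.inductionOn' with
  | one => simp
  | of_mul i w ih =>
    rw [map_mul, map_mul, ih, FreeMonoid.lift_eval_of, Polynomial.monomial_mul_monomial]
    simp [add_comm]

theorem coeff_fockRep (P : FA X) (k : ℕ) :
    (fockRep D P).coeff k =
      ∑ w ∈ (coefficient P).support with w.length = k, coefficient P w • fockWord D w := by
  conv_lhs => rw [← (basisFreeMonoid ℂ X).linearCombination_repr P]
  simp [Finsupp.linearCombination_apply, Finsupp.sum, fockRep_basisFreeMonoid,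
    Polynomial.coeff_monomial, Finset.sum_filter, coefficient_eq_repr]

theorem coeff_fockRep_cstar (P : FA X) (k : ℕ) :
    (fockRep D (cstar P)).coeff k = ((fockRep D P).coeff k)ᴴ := by
  conv_lhs => rw [← (basisFreeMonoid ℂ X).linearCombination_repr P]
  simp [Finsupp.linearCombination_apply, Finsupp.sum, cstar_sum, cstar_smul,
    cstar_basisFreeMonoid, fockRep_basisFreeMonoid, Polynomial.coeff_monomial,
    FreeMonoid.length_star, coeff_fockRep, conjTranspose_sum, Finset.sum_filter,
    coefficient_eq_repr]
  refine Finset.sum_congr rfl fun w _ => ?_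
  split_ifs <;> simp [fockWord_conjTranspose]

theorem coeff_fockRep_eq_zero {m k : ℕ} {P : FA X} (hP : P ∈ degLE X m) (hk : m < k) :
    (fockRep D P).coeff k = 0 := by
  rw [coeff_fockRep]
  refine Finset.sum_eq_zero fun w hw => ?_
  rw [Finset.mem_filter] at hw
  have := hP w hw.1
  omega

theorem trace_coeff_fockRep_eq_zero {c : FA X} (hc : c ∈ Ccyc X) (k : ℕ) :
    trace ((fockRep D c).coeff k) = 0 := by
  rw [Ccyc] at hc
  induction hc using Submodule.span_induction with
  | mem _ hx =>
    obtain ⟨P, Q, rfl⟩ := hx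
    simp only [map_sub, map_mul, Polynomial.coeff_sub, Polynomial.coeff_mul, trace_sub, trace_sum]
    rw [← Finset.Nat.sum_antidiagonal_swap, sub_eq_zero]
    exact Finset.sum_congr rfl fun _ _ => trace_mul_comm _ _
  | zero => simp
  | add _ _ _ _ hx hy => simp [hx, hy]
  | smul _ _ _ hx => simp [hx]

theorem coeff_fockRep_cstar_mul_self {P : FA X} {K : ℕ}
    (hK : ∀ k, K < k → (fockRep D P).coeff k = 0) :
    (fockRep D (cstar P * P)).coeff (2 * K) =
      ((fockRep D P).coeff K)ᴴ * (fockRep D P).coeff K := by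
  rw [map_mul, Polynomial.coeff_mul, Finset.sum_eq_single (K, K)]
  · rw [coeff_fockRep_cstar]
  · rintro ⟨a, b⟩ hab hne
    rw [Finset.HasAntidiagonal.mem_antidiagonal] at hab
    rcases lt_or_gt_of_ne (show a ≠ K by rintro rfl; exact hne (by simp; omega)) with h | h
    · rw [hK b (by omega), mul_zero]
    · rw [coeff_fockRep_cstar, hK a h, conjTranspose_zero, zero_mul]
  · simp [two_mul]

theorem coefficient_eq_zero_of_coeff_fockRep_eq_zero {P : FA X} {w : FreeMonoid X}
    (hw : w.length ≤ D) (h : (fockRep D P).coeff w.length = 0) : coefficient P w = 0 := by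
  by_contra hP
  have := congrFun (congrFun h ⟨w, hw⟩) (vacuum D)
  rw [coeff_fockRep, Matrix.sum_apply, Finset.sum_eq_single w] at this
  · simp [fockWord_apply_vacuum, hP] at this
  · intro v hv hne
    rw [Finset.mem_filter] at hv
    simp [fockWord_apply_vacuum D v ⟨w, hw⟩ hv.2.le, Ne.symm hne]
  · simp [hP]

-- Downward induction on `k`: once the higher coefficients of all `p j` vanish, the trace in `h`
-- at `2 * k` is `Σ j, ‖(fockRep D (p j)).coeff k‖²` (`coeff_fockRep_cstar_mul_self`).
theorem coeff_fockRep_eq_zero_of_trace_coeff_eq_zero {ι : Type*} [Fintype ι] {p : ι → FA X}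
    {c : FA X} (hp : ∀ i, p i ∈ degLE X D) (hc : c ∈ Ccyc X) {k₀ : ℕ}
    (h : ∀ k, k₀ ≤ k → trace ((fockRep D (∑ i, cstar (p i) * p i + c)).coeff (2 * k)) = 0)
    (k : ℕ) (hk : k₀ ≤ k) (i : ι) : (fockRep D (p i)).coeff k = 0 := by
  by_cases hkD : D < k
  · exact coeff_fockRep_eq_zero D (hp i) hkD
  have hsq : ∑ j, trace (((fockRep D (p j)).coeff k)ᴴ * (fockRep D (p j)).coeff k) = 0 := by
    have higher : ∀ j k', k < k' → (fockRep D (p j)).coeff k' = 0 := fun j k' hk' =>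
      coeff_fockRep_eq_zero_of_trace_coeff_eq_zero hp hc h k' (by omega) j
    simpa only [map_add, map_sum, Polynomial.coeff_add, Polynomial.finsetSum_coeff, trace_add,
      trace_sum, trace_coeff_fockRep_eq_zero D hc, add_zero,
      coeff_fockRep_cstar_mul_self D (higher _)] using h k hk
  rw [Finset.sum_eq_zero_iff_of_nonneg fun j _ =>
    (posSemidef_conjTranspose_mul_self _).trace_nonneg] at hsq
  exact trace_conjTranspose_mul_self_eq_zero_iff.mp (hsq i (Finset.mem_univ i))
termination_by D + 1 - k

theorem length_lt_of_trace_coeff_eq_zero {ι : Type*} [Fintype ι] {p : ι → FA X}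
    {c : FA X} (hp : ∀ i, p i ∈ degLE X D) (hc : c ∈ Ccyc X) {k₀ : ℕ}
    (h : ∀ k, k₀ ≤ k → trace ((fockRep D (∑ i, cstar (p i) * p i + c)).coeff (2 * k)) = 0)
    (i : ι) : ∀ w ∈ (coefficient (p i)).support, w.length < k₀ := by
  intro w hw
  by_contra! hk
  exact Finsupp.mem_support_iff.mp hw <| coefficient_eq_zero_of_coeff_fockRep_eq_zero D
    (hp i w hw) (coeff_fockRep_eq_zero_of_trace_coeff_eq_zero D hp hc h _ hk i)

end Fock

section SumsOfHermitianSquares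

variable {X : Type} [Finite X] {ι : Type*} [Fintype ι] {p : ι → FA X}

theorem mem_degLE_half_of_sum_cstar_mul_self_add_mem_degLE {c : FA X} {m : ℕ}
    (hc : c ∈ Ccyc X) (h : ∑ i, cstar (p i) * p i + c ∈ degLE X m) (i : ι) :
    p i ∈ degLE X (m / 2) := by
  classical
  obtain ⟨D, hD⟩ := exists_forall_mem_degLE p
  intro w hw
  have := length_lt_of_trace_coeff_eq_zero D hD hc (k₀ := m / 2 + 1)
    (fun k hk => by rw [coeff_fockRep_eq_zero D h (by omega), trace_zero]) i w hw
  omega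

theorem eq_zero_of_sum_cstar_mul_self_mem_Ccyc (h : ∑ i, cstar (p i) * p i ∈ Ccyc X) (i : ι) :
    p i = 0 := by
  classical
  obtain ⟨D, hD⟩ := exists_forall_mem_degLE p
  have := length_lt_of_trace_coeff_eq_zero D hD (neg_mem h) (k₀ := 0) (by simp) i
  refine coefficient_injective (Finsupp.ext fun w => ?_)
  by_contra hw
  exact absurd (this w (Finsupp.mem_support_iff.mpr (by simpa using hw))) (Nat.not_lt_zero _)

end SumsOfHermitianSquares

section Gram

variable {X : Type} [Finite X] (d : ℕ)

def gram : Matrix (Words X d) (Words X d) ℂ →ₗ[ℂ] FA X where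
  toFun G := ∑ u, ∑ v, G u v • basisFreeMonoid ℂ X (star u.1 * v.1)
  map_add' G H := by simp [add_smul, Finset.sum_add_distrib]
  map_smul' z G := by simp [Finset.smul_sum, smul_smul]

theorem gram_apply (G : Matrix (Words X d) (Words X d) ℂ) :
    gram d G = ∑ u, ∑ v, G u v • basisFreeMonoid ℂ X (star u.1 * v.1) :=
  rfl

theorem gram_mem_degLE (G : Matrix (Words X d) (Words X d) ℂ) : gram d G ∈ degLE X (2 * d) := by
  rw [← mem_degLESubmodule, gram_apply]
  refine Submodule.sum_mem _ fun u _ => Submodule.sum_mem _ fun v _ => Submodule.smul_mem _ _ ?_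
  refine basisFreeMonoid_mem_degLE ?_
  simp only [FreeMonoid.length_mul, FreeMonoid.length_star]
  omega

theorem gram_conjTranspose_mul_self {ι : Type*} [Fintype ι] (B : Matrix ι (Words X d) ℂ) :
    gram d (Bᴴ * B) =
      ∑ i, cstar (∑ u, B i u • basisFreeMonoid ℂ X u.1) * ∑ u, B i u • basisFreeMonoid ℂ X u.1 := by
  simp only [gram_apply, mul_apply, conjTranspose_apply, cstar_sum,
    cstar_smul, cstar_basisFreeMonoid, Finset.sum_mul_sum, smul_mul_smul_comm,
    ← basisFreeMonoid_mul, Finset.sum_smul]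
  conv_rhs => rw [Finset.sum_comm]
  refine Finset.sum_congr rfl fun u _ => ?_
  rw [Finset.sum_comm]
  rfl

theorem gram_mem_Qcone {G : Matrix (Words X d) (Words X d) ℂ} (hG : G.PosSemidef) :
    gram d G ∈ Qcone X := by
  classical
  obtain ⟨B, rfl⟩ := hG.exists_conjTranspose_mul_self_eq
  rw [gram_conjTranspose_mul_self]
  exact sum_cstar_mul_self_mem_Qcone _

theorem exists_posSemidef_gram_eq {ι : Type*} [Fintype ι] {p : ι → FA X}
    (hp : ∀ i, p i ∈ degLE X d) :
    ∃ G : Matrix (Words X d) (Words X d) ℂ, G.PosSemidef ∧ gram d G = ∑ i, cstar (p i) * p i := by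
  let B : Matrix ι (Words X d) ℂ := of fun i u => coefficient (p i) u.1
  refine ⟨Bᴴ * B, posSemidef_conjTranspose_mul_self B, ?_⟩
  simp only [gram_conjTranspose_mul_self, B, of_apply, sum_words_coefficient_smul (hp _)]

theorem eq_zero_of_posSemidef_of_gram_mem_Ccyc {G : Matrix (Words X d) (Words X d) ℂ}
    (hG : G.PosSemidef) (h : gram d G ∈ Ccyc X) : G = 0 := by
  classical
  obtain ⟨B, rfl⟩ := hG.exists_conjTranspose_mul_self_eq
  rw [gram_conjTranspose_mul_self] at h
  have hB : B = 0 := by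
    ext i u
    have := congrArg (coords d) (eq_zero_of_sum_cstar_mul_self_mem_Ccyc h i)
    rw [coords_sum_words_smul, map_zero] at this
    exact congrFun this u
  simp [hB]

end Gram

section Cone

variable {X : Type} [Finite X] (m : ℕ)

attribute [local instance] Matrix.normedAddCommGroup Matrix.normedSpace

def cycCoords : Submodule ℝ (Words X m → ℂ) :=
  (CcycHSubmodule X ⊓ (degLESubmodule X m).restrictScalars ℝ).map
    ((coords m).restrictScalars ℝ)

def gramCone : Set (Matrix (Words X (m / 2)) (Words X (m / 2)) ℂ × (Words X m → ℂ)) :=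
  {x | x.1.PosSemidef ∧ x.2 ∈ cycCoords m}

def gramMap :
    Matrix (Words X (m / 2)) (Words X (m / 2)) ℂ × (Words X m → ℂ) →ₗ[ℝ] (Words X m → ℂ) :=
  ((coords m ∘ₗ gram (m / 2)).restrictScalars ℝ).coprod LinearMap.id

theorem gramMap_apply (G : Matrix (Words X (m / 2)) (Words X (m / 2)) ℂ) (c : Words X m → ℂ) :
    gramMap m (G, c) = coords m (gram (m / 2) G) + c :=
  rfl

theorem isClosed_gramCone : IsClosed (gramCone (X := X) m) :=
  (isClosed_setOf_posSemidef.preimage continuous_fst).inter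
    ((cycCoords m).closed_of_finiteDimensional.preimage continuous_snd)

theorem eq_zero_of_mem_gramCone {x} (hx : x ∈ gramCone (X := X) m) (h0 : gramMap m x = 0) :
    x = 0 := by
  obtain ⟨G, _⟩ := x
  obtain ⟨hG, c, ⟨⟨hcC, -⟩, hcD⟩, rfl⟩ := hx
  have hgram : gram (m / 2) G ∈ degLE X m := degLE_mono (by omega) (gram_mem_degLE _ G)
  have hsum : gram (m / 2) G + c = 0 :=
    eq_of_coords_eq ((degLESubmodule X m).add_mem hgram hcD) (degLESubmodule X m).zero_mem
      (by simpa [gramMap_apply] using h0)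
  have hG0 : G = 0 := eq_zero_of_posSemidef_of_gram_mem_Ccyc _ hG <| by
    rw [eq_neg_of_add_eq_zero_left hsum]
    exact neg_mem hcC
  simp_all

theorem isClosed_image_gramMap : IsClosed (gramMap (X := X) m '' gramCone m) := by
  have hC := isClosed_gramCone (X := X) m
  exact (gramMap m).isClosed_image_of_cone hC
    (fun t ht _ hx => ⟨hx.1.smul ht.le, (cycCoords m).smul_mem t hx.2⟩)
    (fun _ hx h0 => eq_zero_of_mem_gramCone m hx h0)

theorem coords_mem_image_gramMap {P : FA X} (hP : P ∈ coneQC X) (hPm : P ∈ degLE X m) :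
    coords m P ∈ gramMap m '' gramCone m := by
  obtain ⟨_, ⟨N, p, rfl⟩, c, hc, rfl⟩ := hP
  obtain ⟨G, hG, hGp⟩ := exists_posSemidef_gram_eq (m / 2)
    (mem_degLE_half_of_sum_cstar_mul_self_add_mem_degLE hc.1 hPm)
  have hcD : c ∈ degLE X m := by
    rw [show c = ∑ i, cstar (p i) * p i + c - gram (m / 2) G by rw [hGp]; abel]
    exact (degLESubmodule X m).sub_mem hPm (degLE_mono (by omega) (gram_mem_degLE _ G))
  exact ⟨(G, coords m c), ⟨hG, c, ⟨hc, hcD⟩, rfl⟩, by rw [gramMap_apply, hGp, map_add]⟩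

theorem mem_coneQC_of_coords_mem_image_gramMap {Q : FA X} (hQ : Q ∈ degLE X m)
    (h : coords m Q ∈ gramMap m '' gramCone m) : Q ∈ coneQC X := by
  obtain ⟨⟨G, _⟩, ⟨hG, c, ⟨hc, hcD⟩, rfl⟩, hGQ⟩ := h
  refine ⟨gram (m / 2) G, gram_mem_Qcone _ hG, c, hc, (eq_of_coords_eq ?_ hQ ?_).symm⟩
  · exact (degLESubmodule X m).add_mem (degLE_mono (by omega) (gram_mem_degLE _ G)) hcD
  · rwa [map_add]

end Cone

end NCPoly

theorem cone_QC_closed_general (n : ℕ) (m : ℕ)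
    (P : ℕ → FA (Fin n)) (Q : FA (Fin n))
    (hP : ∀ j, P j ∈ herm (Fin n) ∩ degLE (Fin n) m ∩ coneQC (Fin n))
    (hQd : Q ∈ degLE (Fin n) m)
    (hconv : ∀ w : FreeMonoid (Fin n),
      Filter.Tendsto (fun j => coefficient (P j) w) Filter.atTop
        (nhds (coefficient Q w))) :
    Q ∈ coneQC (Fin n) :=
  NCPoly.mem_coneQC_of_coords_mem_image_gramMap m hQd <|
    (NCPoly.isClosed_image_gramMap m).mem_of_tendsto (tendsto_pi_nhds.mpr fun u => hconv u.1) <|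
      .of_forall fun j => NCPoly.coords_mem_image_gramMap m (hP j).2 (hP j).1.2

/-- The convex cone `Q(ℂ⟨X⟩) + C_cyc^h` is closed in `ℂ⟨X⟩^h`
with its finest locally convex topology; equivalently, for every `m` its
intersection with the finite-dimensional space `ℂ⟨X⟩^h_{≤m}` is closed there.
Closedness of the intersection in the finite-dimensional space is expressed
sequentially (via coefficientwise convergence, which is convergence in any norm
on that finite-dimensional space): any coefficientwise limit, hermitian and of
degree at most `m`, of a sequence of hermitian elements of the cone of degree at
most `m` again lies in the cone. -/
theorem cone_QC_closed (n : ℕ) (m : ℕ)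
    (P : ℕ → FA (Fin n)) (Q : FA (Fin n))
    (hP : ∀ j, P j ∈ herm (Fin n) ∩ degLE (Fin n) m ∩ coneQC (Fin n))
    (hQh : Q ∈ herm (Fin n)) (hQd : Q ∈ degLE (Fin n) m)
    (hconv : ∀ w : FreeMonoid (Fin n),
      Filter.Tendsto (fun j => coefficient (P j) w) Filter.atTop
        (nhds (coefficient Q w))) :
    Q ∈ coneQC (Fin n) :=
  cone_QC_closed_general n m P Q hP hQd hconv
end
end

section
/- Let V be a real vector space of countable dimension, let B ⊆ V be a convex cone such that B ∩ W is closed for every finite-dimensional subspace W of V, let F ⊆ V be a finite-dimensional subspace equipped with a norm, and let ε > 0. If φ: F → ℝ is a linear functional with φ(b) ≥ 0 for all b ∈ F ∩ B, then there exists a linear functional ψ: V → ℝ with ψ(b) ≥ 0 for all b ∈ B and ‖ψ|_F − φ‖ ≤ ε, where ‖·‖ denotes the operator norm of linear functionals on the normed space F. -/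
/-!
Exhaust `V` by finite-dimensional subspaces `ι F = G₀ ⊆ G₁ ⊆ ⋯` and put an arbitrary norm on `V`.
In finite dimensions the bipolar theorem shows that a functional on a subspace `H` which is
nonnegative on `B ∩ H` is a limit of restrictions of functionals nonnegative on `B`. So `φ` can be
corrected step by step into functionals `φₙ`, nonnegative on `B ∩ Gₙ`, with `φₙ₊₁` within
`ε 2⁻ⁿ⁻¹` of `φₙ` on `Gₙ`; their pointwise limit is `ψ`.
-/

open Filter Topology

universe u

namespace ProperCone

variable {E : Type*} [NormedAddCommGroup E] [NormedSpace ℝ E]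

theorem mem_closure_image_comp_of_nonneg {F : Type*} [NormedAddCommGroup F] [NormedSpace ℝ F]
    [FiniteDimensional ℝ F] (C : ProperCone ℝ E) (f : F →L[ℝ] E) {φ : StrongDual ℝ F}
    (hφ : ∀ x, f x ∈ C → 0 ≤ φ x) :
    φ ∈ closure ((fun ψ : StrongDual ℝ E => ψ.comp f) '' {ψ | ∀ x ∈ C, 0 ≤ ψ x}) := by
  let D : ProperCone ℝ (StrongDual ℝ F) := Submodule.closure
    ((PointedCone.dual (topDualPairing ℝ E).flip C).map
      (ContinuousLinearMap.precomp ℝ f : StrongDual ℝ E →L[ℝ] StrongDual ℝ F).toLinearMap)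
  change φ ∈ D
  -- `D` is its own bidual, and a point `x` pairing nonnegatively with `D` has `f x ∈ C` by Farkas.
  rw [← dual_flip_dual (topDualPairing ℝ F) D]
  intro x hx
  refine hφ x (not_not.1 fun hfx => ?_)
  obtain ⟨ψ, hψC, hψx⟩ := C.hyperplane_separation_point hfx
  exact (hx (subset_closure ⟨ψ, fun y hy => hψC y hy, rfl⟩)).not_gt hψx

theorem exists_nonneg_near (C : ProperCone ℝ E) (H : Submodule ℝ E) [FiniteDimensional ℝ H]
    (φ : E →ₗ[ℝ] ℝ) (hφ : ∀ x ∈ C, x ∈ H → 0 ≤ φ x) {δ : ℝ} (hδ : 0 < δ) :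
    ∃ ψ : StrongDual ℝ E, (∀ x ∈ C, 0 ≤ ψ x) ∧ ∀ x ∈ H, |ψ x - φ x| ≤ δ * ‖x‖ := by
  let φH : StrongDual ℝ H := LinearMap.toContinuousLinearMap (φ ∘ₗ H.subtype)
  have hφH := C.mem_closure_image_comp_of_nonneg H.subtypeL (φ := φH) fun x hx => hφ x hx x.2
  obtain ⟨_, ⟨ψ, hψC, rfl⟩, hψφ⟩ := Metric.mem_closure_iff.1 hφH δ hδ
  refine ⟨ψ, hψC, fun x hx => ?_⟩
  calc |ψ x - φ x| = ‖(ψ.comp H.subtypeL - φH) ⟨x, hx⟩‖ := rfl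
    _ ≤ ‖ψ.comp H.subtypeL - φH‖ * ‖x‖ := ContinuousLinearMap.le_opNorm _ _
    _ ≤ δ * ‖x‖ := by
      rw [dist_comm, dist_eq_norm] at hψφ
      gcongr

end ProperCone

theorem LinearMap.exists_tendsto_of_dist_succ_le {E : Type*} [NormedAddCommGroup E]
    [NormedSpace ℝ E] (u : ℕ → E →ₗ[ℝ] ℝ) {G : ℕ → Submodule ℝ E} (hG : Monotone G)
    (hG_cover : ∀ x, ∃ n, x ∈ G n) {c : ℝ}
    (hu : ∀ n, ∀ x ∈ G n, dist (u n x) (u (n + 1) x) ≤ c * ‖x‖ / 2 / 2 ^ n) :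
    ∃ ψ : E →ₗ[ℝ] ℝ, ∀ x, Tendsto (fun n => u n x) atTop (𝓝 (ψ x)) := by
  have hconv x : ∃ l, Tendsto (fun n => u n x) atTop (𝓝 l) := by
    obtain ⟨k, hk⟩ := hG_cover x
    have hshift : CauchySeq fun n => u (n + k) x :=
      cauchySeq_of_le_geometric_two (C := c * ‖x‖ / 2 ^ k) fun n => by
        rw [Nat.add_right_comm]
        calc _ ≤ c * ‖x‖ / 2 / 2 ^ (n + k) := hu (n + k) x (hG (Nat.le_add_left k n) hk)
          _ = _ := by rw [pow_add]; field_simp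
    exact cauchySeq_tendsto_of_complete ((cauchySeq_shift k).1 hshift)
  choose f hf using hconv
  exact ⟨linearMapOfTendsto f u (tendsto_pi_nhds.2 hf), hf⟩

namespace PointedCone

variable {E : Type*} [NormedAddCommGroup E] [NormedSpace ℝ E] (C : PointedCone ℝ E)
  {G : ℕ → Submodule ℝ E} [∀ n, FiniteDimensional ℝ (G n)]

theorem exists_seq_nonneg_dist_succ_le (hC : ∀ n, IsClosed ((C : Set E) ∩ G n))
    (φ : E →ₗ[ℝ] ℝ) (hφ : ∀ x ∈ C, x ∈ G 0 → 0 ≤ φ x) {ε : ℝ} (hε : 0 < ε) :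
    ∃ u : ℕ → E →ₗ[ℝ] ℝ, u 0 = φ ∧ (∀ n, ∀ x ∈ C, x ∈ G n → 0 ≤ u n x) ∧
      ∀ n, ∀ x ∈ G n, dist (u n x) (u (n + 1) x) ≤ ε * ‖x‖ / 2 / 2 ^ n := by
  have step n (θ : E →ₗ[ℝ] ℝ) : ∃ θ' : E →ₗ[ℝ] ℝ, (∀ x ∈ C, x ∈ G n → 0 ≤ θ x) →
      (∀ x ∈ C, x ∈ G (n + 1) → 0 ≤ θ' x) ∧
        ∀ x ∈ G n, dist (θ x) (θ' x) ≤ ε * ‖x‖ / 2 / 2 ^ n := by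
    by_cases hθ : ∀ x ∈ C, x ∈ G n → 0 ≤ θ x
    · -- `C` itself need not be closed, only its traces on the `Gₙ`.
      let C' : ProperCone ℝ E := ⟨C ⊓ (G (n + 1)).restrictScalars _, hC (n + 1)⟩
      obtain ⟨ψ, hψC, hψ⟩ := C'.exists_nonneg_near (G n) θ (fun x hx hxn => hθ x hx.1 hxn)
        (δ := ε / 2 / 2 ^ n) (by positivity)
      refine ⟨ψ, fun _ => ⟨fun x hx hxn => hψC x ⟨hx, hxn⟩, fun x hx => ?_⟩⟩
      rw [dist_comm, Real.dist_eq]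
      exact (hψ x hx).trans_eq (by ring)
    · exact ⟨0, fun h => absurd h hθ⟩
  choose next hnext using step
  let u n : E →ₗ[ℝ] ℝ := Nat.rec φ next n
  have hu n : ∀ x ∈ C, x ∈ G n → 0 ≤ u n x :=
    Nat.rec hφ (fun n ih => (hnext n (u n) ih).1) n
  exact ⟨u, rfl, hu, fun n => (hnext n (u n) (hu n)).2⟩

theorem exists_nonneg_near_of_exhaustion (hG : Monotone G) (hG_cover : ∀ x, ∃ n, x ∈ G n)
    (hC : ∀ n, IsClosed ((C : Set E) ∩ G n)) (φ : E →ₗ[ℝ] ℝ) (hφ : ∀ x ∈ C, x ∈ G 0 → 0 ≤ φ x)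
    {ε : ℝ} (hε : 0 < ε) :
    ∃ ψ : E →ₗ[ℝ] ℝ, (∀ x ∈ C, 0 ≤ ψ x) ∧ ∀ x ∈ G 0, |ψ x - φ x| ≤ ε * ‖x‖ := by
  obtain ⟨u, rfl, hu_nonneg, hu_dist⟩ := C.exists_seq_nonneg_dist_succ_le hC φ hφ hε
  obtain ⟨ψ, hψ⟩ := LinearMap.exists_tendsto_of_dist_succ_le u hG hG_cover hu_dist
  refine ⟨ψ, fun x hx => ?_, fun x hx => ?_⟩
  · obtain ⟨k, hk⟩ := hG_cover x
    exact ge_of_tendsto (hψ x) <|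
      (eventually_ge_atTop k).mono fun n hn => hu_nonneg n x hx (hG hn hk)
  · rw [abs_sub_comm, ← Real.dist_eq]
    exact dist_le_of_le_geometric_two_of_tendsto₀ (C := ε * ‖x‖)
      (fun n => hu_dist n x (hG (Nat.zero_le n) hx)) (hψ x)

end PointedCone

theorem Module.exists_injective_linearMap_lp_one (V : Type u) [AddCommGroup V] [Module ℝ V] :
    ∃ (I : Type u) (T : V →ₗ[ℝ] lp (fun _ : I => ℝ) 1), Function.Injective T := by
  let b := Module.Basis.ofVectorSpace ℝ V
  let T : V →ₗ[ℝ] lp (fun _ : Module.Basis.ofVectorSpaceIndex ℝ V => ℝ) 1 :=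
    { toFun v := ⟨⇑(b.repr v),
        (memℓp_zero_iff.2 (b.repr v).hasFiniteSupport).of_exponent_ge zero_le⟩
      map_add' v w := lp.ext <| congrArg DFunLike.coe (map_add b.repr v w)
      map_smul' c v := lp.ext <| congrArg DFunLike.coe (map_smul b.repr c v) }
  refine ⟨_, T, fun v w h => b.repr.injective ?_⟩
  exact DFunLike.coe_injective (congrArg (fun x : lp _ 1 => (x : _ → ℝ)) h)

theorem Submodule.exists_monotone_finiteDimensional_exhaustion {K V : Type*} [DivisionRing K]
    [AddCommGroup V] [Module K V] (hV : ∃ s : Set V, s.Countable ∧ span K s = ⊤)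
    (H : Submodule K V) [FiniteDimensional K H] :
    ∃ G : ℕ → Submodule K V, G 0 = H ∧ Monotone G ∧ (∀ n, FiniteDimensional K (G n)) ∧
      ∀ x, ∃ n, x ∈ G n := by
  obtain ⟨s, hs, hsV⟩ := hV
  obtain ⟨w, hsw⟩ := Set.countable_iff_exists_subset_range.1 hs
  let G n := H ⊔ span K (w '' Set.Iio n)
  have hG : Monotone G := fun m n hmn =>
    sup_le_sup_left (span_mono (Set.image_mono (Set.Iio_subset_Iio hmn))) H
  have hG_fin n : FiniteDimensional K (G n) :=
    have := FiniteDimensional.span_of_finite K ((Set.finite_Iio n).image w)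
    inferInstance
  refine ⟨G, by simp [G], hG, hG_fin, fun x => (mem_iSup_of_directed G hG.directed_le).1 ?_⟩
  have hw : span K (Set.range w) ≤ ⨆ n, G n := span_le.2 <| Set.range_subset_iff.2 fun i =>
    le_iSup G (i + 1) (mem_sup_right (subset_span ⟨i, Nat.lt_succ_self i, rfl⟩))
  exact hw (span_mono hsw (hsV ▸ mem_top))

theorem isClosed_inter_of_forall_isClosed_preimage {E : Type*} [NormedAddCommGroup E]
    [NormedSpace ℝ E] {B : Set E}
    (hB : ∀ (d : ℕ) (f : (Fin d → ℝ) →ₗ[ℝ] E), IsClosed (f ⁻¹' B))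
    (G : Submodule ℝ E) [FiniteDimensional ℝ G] : IsClosed (B ∩ G) := by
  let f := G.subtype ∘ₗ (Module.finBasis ℝ G).equivFun.symm.toLinearMap
  have hf : IsClosedEmbedding f := LinearMap.isClosedEmbedding_of_injective <|
    LinearMap.ker_eq_bot.2 (G.injective_subtype.comp (LinearEquiv.injective _))
  have hrange : Set.range f = G := by
    simp [f, Set.range_comp]
  rw [← hrange, ← Set.image_preimage_eq_inter_range]
  exact hf.isClosedMap _ (hB _ f)

-- A nonempty convex cone already contains `0 = 0 • x`; adjoining `0` only matters for `∅`.
def PointedCone.insertZero {E : Type*} [AddCommGroup E] [Module ℝ E] (B : Set E)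
    (hadd : ∀ x ∈ B, ∀ y ∈ B, x + y ∈ B) (hsmul : ∀ r : ℝ, 0 ≤ r → ∀ x ∈ B, r • x ∈ B) :
    PointedCone ℝ E where
  carrier := insert 0 B
  zero_mem' := Set.mem_insert 0 B
  add_mem' := by
    rintro x y (rfl | hx) (rfl | hy)
    all_goals simp_all
  smul_mem' := by
    rintro c x (rfl | hx)
    · simp
    · exact Or.inr (hsmul c c.2 x hx)

@[simp]
theorem PointedCone.coe_insertZero {E : Type*} [AddCommGroup E] [Module ℝ E] (B : Set E)
    (hadd : ∀ x ∈ B, ∀ y ∈ B, x + y ∈ B) (hsmul : ∀ r : ℝ, 0 ≤ r → ∀ x ∈ B, r • x ∈ B) :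
    (insertZero B hadd hsmul : Set E) = insert 0 B := rfl

/-- Let `V` be a real vector space of countable dimension and let
`B ⊆ V` be a convex cone whose intersection with every finite-dimensional subspace
is closed (equivalently, `B` is closed in the finest locally convex topology;
expressed here as: the preimage of `B` under every linear map `ℝ^d → V` is
closed).  Let `F` be a finite-dimensional normed space, realized inside `V` via an
injective linear map `ι : F → V`, let `ε > 0`, and let `φ : F → ℝ` be a linear
functional which is nonnegative on `F ∩ B`.  Then there is a linear functional
`ψ : V → ℝ` which is nonnegative on `B` and satisfies `‖ψ|_F - φ‖ ≤ ε` in the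
operator norm on functionals on `F`. -/
theorem positive_extension_up_to_epsilon
    {V : Type*} [AddCommGroup V] [Module ℝ V]
    (hdim : ∃ s : Set V, s.Countable ∧ Submodule.span ℝ s = ⊤)
    (B : Set V)
    (hadd : ∀ x ∈ B, ∀ y ∈ B, x + y ∈ B)
    (hsmul : ∀ r : ℝ, 0 ≤ r → ∀ x ∈ B, r • x ∈ B)
    (hclosed : ∀ (d : ℕ) (f : (Fin d → ℝ) →ₗ[ℝ] V), IsClosed (f ⁻¹' B))
    {F : Type*} [NormedAddCommGroup F] [NormedSpace ℝ F] [FiniteDimensional ℝ F]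
    (ι : F →ₗ[ℝ] V) (hι : Function.Injective ι)
    (ε : ℝ) (hε : 0 < ε)
    (φ : F →ₗ[ℝ] ℝ) (hφ : ∀ b : F, ι b ∈ B → 0 ≤ φ b) :
    ∃ ψ : V →ₗ[ℝ] ℝ, (∀ b ∈ B, 0 ≤ ψ b) ∧
      ‖LinearMap.toContinuousLinearMap (ψ.comp ι - φ)‖ ≤ ε := by
  obtain ⟨I, T, hT⟩ := Module.exists_injective_linearMap_lp_one V
  let _ : NormedAddCommGroup V := .induced V (lp (fun _ : I => ℝ) 1) T hT
  let _ : NormedSpace ℝ V := .induced ℝ V (lp (fun _ : I => ℝ) 1) T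
  obtain ⟨G, hG0, hG, hG_fin, hG_cover⟩ :=
    Submodule.exists_monotone_finiteDimensional_exhaustion hdim (LinearMap.range ι)
  obtain ⟨π, hπ⟩ := ι.exists_leftInverse_of_injective (LinearMap.ker_eq_bot.2 hι)
  have hπι x : π (ι x) = x := LinearMap.congr_fun hπ x
  let M := ‖LinearMap.toContinuousLinearMap ι‖ + 1
  have hM : 0 < M := by positivity
  have hC n : IsClosed ((PointedCone.insertZero B hadd hsmul : Set V) ∩ G n) := by
    rw [PointedCone.coe_insertZero, Set.insert_inter_of_mem (G n).zero_mem, Set.insert_eq]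
    exact isClosed_singleton.union (isClosed_inter_of_forall_isClosed_preimage hclosed (G n))
  have hφπ : ∀ x ∈ PointedCone.insertZero B hadd hsmul, x ∈ G 0 → 0 ≤ φ (π x) := by
    rintro x (rfl | hxB) hx
    · simp
    · obtain ⟨b, rfl⟩ := hG0 ▸ hx
      simpa [hπι] using hφ b hxB
  obtain ⟨ψ, hψB, hψ⟩ := (PointedCone.insertZero B hadd hsmul).exists_nonneg_near_of_exhaustion
    hG hG_cover hC (φ ∘ₗ π) hφπ (ε := ε / M) (by positivity)
  refine ⟨ψ, fun b hb => hψB b (Set.mem_insert_of_mem 0 hb),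
    ContinuousLinearMap.opNorm_le_bound _ hε.le fun x => ?_⟩
  calc ‖LinearMap.toContinuousLinearMap (ψ ∘ₗ ι - φ) x‖ = |ψ (ι x) - (φ ∘ₗ π) (ι x)| := by
        simp [hπι]
    _ ≤ ε / M * ‖ι x‖ := hψ _ (hG0 ▸ LinearMap.mem_range_self ι x)
    _ ≤ ε / M * (M * ‖x‖) := by
        gcongr
        exact (LinearMap.toContinuousLinearMap ι).le_opNorm x |>.trans (by gcongr; linarith)
    _ = ε * ‖x‖ := by field_simp
end

section
/- Let τ be a positive trace on a unital ℂ-algebra A with involution. Then for all n ∈ ℕ and all a₁,…,aₙ ∈ A, |τ(a₁a₂⋯aₙ)| ≤ ∏_{i=1}^n τ((aᵢ*aᵢ)^{φ(n)})^{1/(2φ(n))}, where φ(n) = 2^{n/2−1} for even n and φ(n) = φ(n+1) = 2^{(n+1)/2−1} for odd n. -/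
open scoped ComplexOrder

noncomputable section

/-- A positive trace on a unital complex `*`-algebra: a `ℂ`-linear functional
with `τ(1) = 1`, `τ(a*a) ≥ 0` (a nonnegative real) and `τ(ab) = τ(ba)`. -/
def IsTrace {A : Type*} [Ring A] [Algebra ℂ A] [StarRing A] [StarModule ℂ A]
    (τ : A →ₗ[ℂ] ℂ) : Prop :=
  τ 1 = 1 ∧ (∀ a, 0 ≤ τ (star a * a)) ∧ (∀ a b, τ (a * b) = τ (b * a))

/-- `φ(n) = 2^{n/2-1}` for even `n`, and `φ(n) = φ(n+1) = 2^{(n+1)/2-1}` for odd `n`. -/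
def phi (m : ℕ) : ℕ := if Even m then 2 ^ (m / 2 - 1) else 2 ^ ((m + 1) / 2 - 1)

/-!
The form `⟨x, y⟩ = τ(x⋆ y)` is a semi-inner product, so Cauchy–Schwarz holds for it. For
self-adjoint `u, b` it gives the Hölder-type bound `|τ((ub)^N)|² ≤ τ(u^{2N}) τ(b^{2N})` at
`N = 1`, and this bound passes from `N` to `2N` together with the symmetrization bound
`τ((ub)^N (bu)^N) ≤ τ((u²b²)^N)`: each step of one uses the other, after cyclic rearrangements
under the trace. Peeling off one factor at a time, the Hölder bound gives
`τ((PP⋆)^{2^k})^{2^{L-1}} ≤ ∏ τ((aᵢ⋆aᵢ)^{2^{L-1+k}})` for a product `P` of `L` factors.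
Finally `a₁⋯aₙ`, padded with `1`s to length `2(m+1)` where `φ(n) = 2^m`, is split into two
halves of length `m + 1` and Cauchy–Schwarz is applied once more.
-/
theorem Real.le_prod_rpow_one_div_of_pow_le {ι : Type*} (s : Finset ι) {f : ι → ℝ}
    (hf : ∀ i ∈ s, 0 ≤ f i) {x : ℝ} (hx : 0 ≤ x) {k : ℕ} (hk : k ≠ 0)
    (h : x ^ k ≤ ∏ i ∈ s, f i) : x ≤ ∏ i ∈ s, f i ^ (1 / (k : ℝ)) := by
  rw [Real.finsetProd_rpow s f hf, one_div, ← Real.pow_rpow_inv_natCast hx hk]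
  exact Real.rpow_le_rpow (by positivity) h (by positivity)

theorem phi_eq_two_pow (n : ℕ) : phi n = 2 ^ ((n + 1) / 2 - 1) := by
  unfold phi
  split_ifs with h
  · obtain ⟨c, rfl⟩ := h
    congr 1
    omega
  · rfl

theorem trace_pow_mul_comm {M β : Type*} [Monoid M] {τ : M → β}
    (hcomm : ∀ a b, τ (a * b) = τ (b * a)) (x y : M) (N : ℕ) :
    τ ((x * y) ^ N) = τ ((y * x) ^ N) := by
  cases N with
  | zero => simp
  | succ N => rw [pow_succ, ← mul_assoc, hcomm, mul_pow_mul, ← mul_assoc, ← pow_succ']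

theorem re_trace_star_mul_self_pow_nonneg {M : Type*} [Monoid M] [StarMul M] {τ : M → ℂ}
    (hpos : ∀ a, 0 ≤ τ (star a * a)) (x : M) (n : ℕ) :
    0 ≤ (τ ((star x * x) ^ n)).re := by
  have hsa := (IsSelfAdjoint.star_mul_self x).pow
  suffices ∃ y, (star x * x) ^ n = star y * y by
    obtain ⟨y, hy⟩ := this
    exact hy ▸ (Complex.nonneg_iff.1 (hpos y)).1
  obtain ⟨m, rfl | rfl⟩ := Nat.even_or_odd' n
  · exact ⟨(star x * x) ^ m, by rw [(hsa m).star_eq, ← pow_add, two_mul]⟩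
  · refine ⟨x * (star x * x) ^ m, ?_⟩
    rw [star_mul, (hsa m).star_eq, mul_assoc, ← mul_assoc (star x), ← pow_succ', ← pow_add]
    congr 1
    omega

section
variable {A : Type*} [Ring A] [StarRing A] [Algebra ℂ A] {τ : A →ₗ[ℂ] ℂ}

variable (τ) in
def TracialHolderAt (N : ℕ) : Prop :=
  ∀ ⦃u b : A⦄, IsSelfAdjoint u → IsSelfAdjoint b →
    ‖τ ((u * b) ^ N)‖ ^ 2 ≤ (τ (u ^ (2 * N))).re * (τ (b ^ (2 * N))).re

variable (τ) in
def TracialSymmetrizationAt (N : ℕ) : Prop :=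
  ∀ ⦃u b : A⦄, IsSelfAdjoint u → IsSelfAdjoint b →
    (τ ((u * b) ^ N * (b * u) ^ N)).re ≤ (τ ((u ^ 2 * b ^ 2) ^ N)).re

theorem tracialSymmetrizationAt_one (hcomm : ∀ a b, τ (a * b) = τ (b * a)) :
    TracialSymmetrizationAt τ 1 := by
  intro u b _ _
  have h : (u * b) * (b * u) = u * (b ^ 2 * u) := by noncomm_ring
  rw [pow_one, pow_one, pow_one, h, hcomm, mul_assoc, ← sq, hcomm]

theorem TracialSymmetrizationAt.two_mul (hpos : ∀ a, 0 ≤ τ (star a * a))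
    (hcomm : ∀ a b, τ (a * b) = τ (b * a)) {N : ℕ} (hS : TracialSymmetrizationAt τ N)
    (hH : TracialHolderAt τ N) : TracialSymmetrizationAt τ (2 * N) := by
  intro u b hu hb
  set p := star (u * b) * (u * b) with hp_def
  set q := star (b * u) * (b * u) with hq_def
  set Z := (τ ((u ^ 2 * b ^ 2) ^ (2 * N))).re
  have hp : τ (p ^ (2 * N)) = τ ((u ^ 2 * b ^ 2) ^ (2 * N)) := by
    have h : p = b * (u ^ 2 * b) := by rw [hp_def, star_mul, hu.star_eq, hb.star_eq]; noncomm_ring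
    rw [h, trace_pow_mul_comm hcomm, mul_assoc, ← sq]
  have hq : τ (q ^ (2 * N)) = τ ((u ^ 2 * b ^ 2) ^ (2 * N)) := by
    have h : q = u * (b ^ 2 * u) := by rw [hq_def, star_mul, hu.star_eq, hb.star_eq]; noncomm_ring
    rw [h, trace_pow_mul_comm hcomm, mul_assoc, ← sq, trace_pow_mul_comm hcomm]
  have hZ : 0 ≤ Z := by
    simpa only [Z, ← hp] using re_trace_star_mul_self_pow_nonneg hpos (u * b) (2 * N)
  have hpq : ‖τ ((p * q) ^ N)‖ ≤ Z := by
    have h : ‖τ ((p * q) ^ N)‖ ^ 2 ≤ (τ (p ^ (2 * N))).re * (τ (q ^ (2 * N))).re :=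
      hH (.star_mul_self _) (.star_mul_self _)
    rw [hp, hq, ← sq] at h
    exact le_of_sq_le_sq h hZ
  have hw : IsSelfAdjoint (u * b * u) := by simpa only [hu.star_eq] using hb.conjugate u
  have hsq (c d : A) : (c * d) ^ (2 * N) = (c * d * c * d) ^ N := by
    rw [pow_mul, sq, ← mul_assoc]
  -- With `w = ubu`, `(ub)^{2N} (bu)^{2N} = (wb)^N (bw)^N`, and `w²b²` is cyclically `pq`.
  calc (τ ((u * b) ^ (2 * N) * (b * u) ^ (2 * N))).re
      = (τ ((u * b * u * b) ^ N * (b * (u * b * u)) ^ N)).re := by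
        rw [hsq, hsq]; simp only [mul_assoc]
    _ ≤ (τ (((u * b * u) ^ 2 * b ^ 2) ^ N)).re := hS hw hb
    _ = (τ ((p * q) ^ N)).re := by
        have h₁ : (u * b * u) ^ 2 * b ^ 2 = u * (b * u ^ 2 * b * u * b ^ 2) := by noncomm_ring
        have h₂ : p * q = b * u ^ 2 * b * u * b ^ 2 * u := by
          rw [hp_def, hq_def, star_mul, star_mul, hu.star_eq, hb.star_eq]; noncomm_ring
        rw [h₁, h₂, trace_pow_mul_comm hcomm]
    _ ≤ Z := (Complex.re_le_norm _).trans hpq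

variable [StarModule ℂ A]

theorem trace_star_mul_eq_conj (hpos : ∀ a, 0 ≤ τ (star a * a)) (x y : A) :
    τ (star y * x) = starRingEnd ℂ (τ (star x * y)) := by
  have im_eq_zero a : (τ (star a * a)).im = 0 := (Complex.nonneg_iff.1 (hpos a)).2.symm
  have hadd := im_eq_zero (x + y)
  have hI := im_eq_zero (x + Complex.I • y)
  simp only [star_add, star_smul, add_mul, mul_add, smul_mul_assoc, mul_smul_comm, map_add,
    map_smul, smul_eq_mul, Complex.add_im, Complex.mul_im, Complex.star_def, Complex.conj_I,
    Complex.mul_re, Complex.neg_re, Complex.neg_im, Complex.I_re, Complex.I_im, im_eq_zero x,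
    im_eq_zero y] at hadd hI
  apply Complex.ext <;> simp only [Complex.conj_re, Complex.conj_im] <;> linarith

abbrev traceInnerCore (hpos : ∀ a, 0 ≤ τ (star a * a)) : PreInnerProductSpace.Core ℂ A where
  inner x y := τ (star x * y)
  conj_inner_symm x y := (trace_star_mul_eq_conj hpos y x).symm
  re_inner_nonneg x := (Complex.nonneg_iff.1 (hpos x)).1
  add_left x y z := by simp only [star_add, add_mul, map_add]
  smul_left x y r := by simp only [star_smul, smul_mul_assoc, map_smul, smul_eq_mul]; rfl

theorem norm_trace_star_mul_sq_le (hpos : ∀ a, 0 ≤ τ (star a * a)) (x y : A) :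
    ‖τ (star x * y)‖ ^ 2 ≤ (τ (star x * x)).re * (τ (star y * y)).re := by
  let _ := traceInnerCore hpos
  have h := InnerProductSpace.Core.inner_mul_inner_self_le (𝕜 := ℂ) x y
  rwa [InnerProductSpace.Core.norm_inner_symm y x, ← sq] at h

theorem tracialHolderAt_one (hpos : ∀ a, 0 ≤ τ (star a * a)) : TracialHolderAt τ 1 := by
  intro u b hu hb
  simpa only [pow_one, mul_one, sq, hu.star_eq, hb.star_eq] using
    norm_trace_star_mul_sq_le hpos u b

theorem TracialHolderAt.two_mul (hpos : ∀ a, 0 ≤ τ (star a * a))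
    (hcomm : ∀ a b, τ (a * b) = τ (b * a)) {N : ℕ} (hH : TracialHolderAt τ N)
    (hS : TracialSymmetrizationAt τ N) : TracialHolderAt τ (2 * N) := by
  intro u b hu hb
  set X := (u * b) ^ N
  have hX : star X = (b * u) ^ N := by rw [star_pow, star_mul, hu.star_eq, hb.star_eq]
  have hs : 0 ≤ (τ (X * star X)).re := by
    simpa only [star_star, pow_one] using re_trace_star_mul_self_pow_nonneg hpos (star X) 1
  have hsG : (τ (X * star X)).re ≤ ‖τ ((u ^ 2 * b ^ 2) ^ N)‖ :=
    hX ▸ (hS hu hb).trans (Complex.re_le_norm _)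
  have hpow (c : A) : (c ^ 2) ^ (2 * N) = c ^ (2 * (2 * N)) := (pow_mul c 2 (2 * N)).symm
  calc ‖τ ((u * b) ^ (2 * N))‖ ^ 2
      = ‖τ (star (star X) * X)‖ ^ 2 := by rw [star_star, ← pow_add, _root_.two_mul]
    _ ≤ (τ (X * star X)).re * (τ (star X * X)).re := by
        simpa only [star_star] using norm_trace_star_mul_sq_le hpos (star X) X
    _ = (τ (X * star X)).re ^ 2 := by rw [hcomm (star X), sq]
    _ ≤ ‖τ ((u ^ 2 * b ^ 2) ^ N)‖ ^ 2 := pow_le_pow_left₀ hs hsG 2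
    _ ≤ _ := by simpa only [hpow] using hH (hu.pow 2) (hb.pow 2)

theorem tracialHolderAt_two_pow (hpos : ∀ a, 0 ≤ τ (star a * a))
    (hcomm : ∀ a b, τ (a * b) = τ (b * a)) (k : ℕ) : TracialHolderAt τ (2 ^ k) := by
  suffices TracialHolderAt τ (2 ^ k) ∧ TracialSymmetrizationAt τ (2 ^ k) from this.1
  induction k with
  | zero => exact ⟨tracialHolderAt_one hpos, tracialSymmetrizationAt_one hcomm⟩
  | succ k ih =>
    rw [pow_succ']
    exact ⟨ih.1.two_mul hpos hcomm ih.2, ih.2.two_mul hpos hcomm ih.1⟩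

theorem re_trace_pow_pow_two_pow_le (hpos : ∀ a, 0 ≤ τ (star a * a)) (hone : τ 1 = 1) {h : A}
    (hh : IsSelfAdjoint h) (m d : ℕ) : (τ (h ^ m)).re ^ 2 ^ d ≤ (τ (h ^ (2 ^ d * m))).re := by
  induction d generalizing m with
  | zero => simp
  | succ d ih =>
    have hsq : (τ (h ^ m)).re ^ 2 ≤ (τ (h ^ (2 * m))).re :=
      calc (τ (h ^ m)).re ^ 2 ≤ ‖τ (star (h ^ m) * 1)‖ ^ 2 := by
            rw [(hh.pow m).star_eq, mul_one, ← sq_abs]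
            exact pow_le_pow_left₀ (abs_nonneg _) (Complex.abs_re_le_norm _) 2
        _ ≤ (τ (star (h ^ m) * h ^ m)).re * (τ (star 1 * 1)).re :=
            norm_trace_star_mul_sq_le hpos _ _
        _ = (τ (h ^ (2 * m))).re := by
            rw [(hh.pow m).star_eq, ← pow_add, ← two_mul, star_one, one_mul, hone,
              Complex.one_re, mul_one]
    calc (τ (h ^ m)).re ^ 2 ^ (d + 1) = ((τ (h ^ m)).re ^ 2) ^ 2 ^ d := by
          rw [← pow_mul, pow_succ']
      _ ≤ (τ (h ^ (2 * m))).re ^ 2 ^ d := pow_le_pow_left₀ (sq_nonneg _) hsq _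
      _ ≤ (τ (h ^ (2 ^ d * (2 * m)))).re := ih (2 * m)
      _ = (τ (h ^ (2 ^ (d + 1) * m))).re := by rw [pow_succ, mul_assoc]

theorem re_trace_mul_mul_star_pow_sq_le (hpos : ∀ a, 0 ≤ τ (star a * a))
    (hcomm : ∀ a b, τ (a * b) = τ (b * a)) (x V : A) (k : ℕ) :
    (τ ((x * V * star (x * V)) ^ 2 ^ k)).re ^ 2 ≤
      (τ ((V * star V) ^ 2 ^ (k + 1))).re * (τ ((star x * x) ^ 2 ^ (k + 1))).re := by
  have hcyc : τ ((x * V * star (x * V)) ^ 2 ^ k) = τ ((V * star V * (star x * x)) ^ 2 ^ k) := by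
    rw [star_mul, show x * V * (star V * star x) = x * (V * star V * star x) by noncomm_ring,
      trace_pow_mul_comm hcomm, mul_assoc]
  have hnonneg : 0 ≤ (τ ((x * V * star (x * V)) ^ 2 ^ k)).re := by
    simpa only [star_star] using re_trace_star_mul_self_pow_nonneg hpos (star (x * V)) (2 ^ k)
  calc (τ ((x * V * star (x * V)) ^ 2 ^ k)).re ^ 2
      ≤ ‖τ ((V * star V * (star x * x)) ^ 2 ^ k)‖ ^ 2 :=
        hcyc ▸ pow_le_pow_left₀ hnonneg (Complex.re_le_norm _) 2
    _ ≤ _ := by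
        rw [pow_succ' 2 k]
        exact tracialHolderAt_two_pow hpos hcomm k (.mul_star_self V) (.star_mul_self x)

theorem re_trace_prod_mul_star_pow_le (hτ : IsTrace τ) (x : A) (t : List A) (k : ℕ) :
    (τ (((x :: t).prod * star (x :: t).prod) ^ 2 ^ k)).re ^ 2 ^ t.length ≤
      ((x :: t).map fun y => (τ ((star y * y) ^ 2 ^ (t.length + k))).re).prod := by
  obtain ⟨hone, hpos, hcomm⟩ := hτ
  induction t generalizing x k with
  | nil => simp [trace_pow_mul_comm hcomm x]
  | cons y t ih =>
    set V := (y :: t).prod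
    set n := t.length
    have hV : 0 ≤ (τ ((V * star V) ^ 2 ^ (k + 1))).re := by
      simpa only [star_star] using re_trace_star_mul_self_pow_nonneg hpos (star V) _
    have hx : 0 ≤ (τ ((star x * x) ^ 2 ^ (k + 1))).re :=
      re_trace_star_mul_self_pow_nonneg hpos x _
    have hVle : (τ ((V * star V) ^ 2 ^ (k + 1))).re ^ 2 ^ n ≤
        ((y :: t).map fun z => (τ ((star z * z) ^ 2 ^ (n + 1 + k))).re).prod := by
      simpa only [Nat.add_right_comm n 1 k, add_assoc] using ih y (k + 1)
    have hxle : (τ ((star x * x) ^ 2 ^ (k + 1))).re ^ 2 ^ n ≤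
        (τ ((star x * x) ^ 2 ^ (n + 1 + k))).re := by
      simpa only [← pow_add, Nat.add_right_comm n 1 k, add_assoc] using
        re_trace_pow_pow_two_pow_le hpos hone (.star_mul_self x) (2 ^ (k + 1)) n
    calc (τ (((x :: y :: t).prod * star (x :: y :: t).prod) ^ 2 ^ k)).re ^ 2 ^ (n + 1)
        = ((τ ((x * V * star (x * V)) ^ 2 ^ k)).re ^ 2) ^ 2 ^ n := by
          rw [List.prod_cons, ← pow_mul, ← pow_succ']
      _ ≤ ((τ ((V * star V) ^ 2 ^ (k + 1))).re * (τ ((star x * x) ^ 2 ^ (k + 1))).re) ^ 2 ^ n :=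
          pow_le_pow_left₀ (sq_nonneg _) (re_trace_mul_mul_star_pow_sq_le hpos hcomm x V k) _
      _ ≤ ((y :: t).map fun z => (τ ((star z * z) ^ 2 ^ (n + 1 + k))).re).prod *
            (τ ((star x * x) ^ 2 ^ (n + 1 + k))).re := by
          rw [mul_pow]
          exact mul_le_mul hVle hxle (pow_nonneg hx _) ((pow_nonneg hV _).trans hVle)
      _ = _ := by simp only [List.map_cons, List.prod_cons, List.length_cons, n]; ring

theorem norm_trace_prod_append_pow_le (hτ : IsTrace τ) {s t : List A} {m : ℕ}
    (hs : s.length = m + 1) (ht : t.length = m + 1) :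
    ‖τ (s ++ t).prod‖ ^ 2 ^ (m + 1) ≤
      ((s ++ t).map fun y => (τ ((star y * y) ^ 2 ^ m)).re).prod := by
  obtain ⟨x, s, rfl⟩ := List.exists_cons_of_length_eq_add_one hs
  obtain ⟨y, t, rfl⟩ := List.exists_cons_of_length_eq_add_one ht
  simp only [List.length_cons, Nat.add_right_cancel_iff] at hs ht
  set S := (x :: s).prod
  set T := (y :: t).prod
  have hS := re_trace_prod_mul_star_pow_le hτ x s 0
  have hT := re_trace_prod_mul_star_pow_le hτ y t 0
  rw [hs, pow_zero, pow_one, add_zero] at hS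
  rw [ht, pow_zero, pow_one, add_zero] at hT
  have hST : ‖τ (S * T)‖ ^ 2 ≤ (τ (S * star S)).re * (τ (T * star T)).re := by
    simpa only [star_star, hτ.2.2 (star T)] using norm_trace_star_mul_sq_le hτ.2.1 (star S) T
  have hS0 : 0 ≤ (τ (S * star S)).re := by
    simpa only [star_star, pow_one] using re_trace_star_mul_self_pow_nonneg hτ.2.1 (star S) 1
  have hT0 : 0 ≤ (τ (T * star T)).re := by
    simpa only [star_star, pow_one] using re_trace_star_mul_self_pow_nonneg hτ.2.1 (star T) 1
  calc ‖τ (x :: s ++ y :: t).prod‖ ^ 2 ^ (m + 1) = (‖τ (S * T)‖ ^ 2) ^ 2 ^ m := by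
        rw [List.prod_append, ← pow_mul, ← pow_succ']
    _ ≤ ((τ (S * star S)).re * (τ (T * star T)).re) ^ 2 ^ m :=
        pow_le_pow_left₀ (sq_nonneg _) hST _
    _ ≤ _ := by
        rw [mul_pow, List.map_append, List.prod_append]
        exact mul_le_mul hS hT (pow_nonneg hT0 _) ((pow_nonneg hS0 _).trans hS)

theorem norm_trace_prod_pow_le_of_length_le (hτ : IsTrace τ) {l : List A} {m : ℕ}
    (hl : l.length ≤ 2 * (m + 1)) :
    ‖τ l.prod‖ ^ 2 ^ (m + 1) ≤ (l.map fun y => (τ ((star y * y) ^ 2 ^ m)).re).prod := by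
  set l' := l ++ List.replicate (2 * (m + 1) - l.length) 1
  have hlen : l'.length = 2 * (m + 1) := by
    simp only [l', List.length_append, List.length_replicate]; omega
  have h := norm_trace_prod_append_pow_le hτ (m := m) (s := l'.take (m + 1)) (t := l'.drop (m + 1))
    (by rw [List.length_take, hlen]; omega) (by rw [List.length_drop, hlen]; omega)
  simpa [l', hτ.1] using h

end

/-- generalized Cauchy–Schwarz inequality.  For a positive trace
`τ` on a unital complex `*`-algebra and `a₁,…,aₙ ∈ A`,
`|τ(a₁⋯aₙ)| ≤ ∏ᵢ τ((aᵢ*aᵢ)^{φ(n)})^{1/(2φ(n))}`.  (Each `τ((aᵢ*aᵢ)^{φ(n)})` is a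
nonnegative real, recorded via its real part.) -/
theorem generalized_cauchy_schwarz
    {A : Type*} [Ring A] [Algebra ℂ A] [StarRing A] [StarModule ℂ A]
    (τ : A →ₗ[ℂ] ℂ) (hτ : IsTrace τ) (n : ℕ) (a : Fin n → A) :
    ‖τ (List.ofFn a).prod‖ ≤
      ∏ i, ((τ ((star (a i) * a i) ^ phi n)).re) ^ (1 / (2 * (phi n : ℝ))) := by
  obtain ⟨m, hphi, hn⟩ : ∃ m, phi n = 2 ^ m ∧ n ≤ 2 * (m + 1) := ⟨_, phi_eq_two_pow n, by omega⟩
  have key := norm_trace_prod_pow_le_of_length_le hτ (l := List.ofFn a) (m := m)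
    (by simpa using hn)
  rw [List.map_ofFn, List.prod_ofFn] at key
  have hexp : 2 * (phi n : ℝ) = ((2 ^ (m + 1) : ℕ) : ℝ) := by rw [hphi]; push_cast; ring
  rw [hexp, hphi]
  exact Real.le_prod_rpow_one_div_of_pow_le _
    (fun i _ => re_trace_star_mul_self_pow_nonneg hτ.2.1 (a i) _) (norm_nonneg _)
    (by positivity) key
end
end

section
/- Let (A,τ) be a tracial *-algebra. For every even positive integer p and all a, b ∈ A, ‖ab‖_p ≤ ‖a‖_{φ(p+4)} · ‖b‖_{φ(p+4)}, where φ(m) = 2^{m/2−1} for even m (so φ(p+4) = 2^{p/2+1}). -/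
open scoped ComplexOrder

noncomputable section

/-- For even `p`, the `p`-norm `‖a‖_p = τ((a*a)^{p/2})^{1/p}` associated to a
trace `τ` (the value `τ((a*a)^{p/2})` is a nonnegative real, recorded via its
real part). -/
def pnorm {A : Type*} [Ring A] [Algebra ℂ A] [StarRing A] [StarModule ℂ A]
    (τ : A →ₗ[ℂ] ℂ) (p : ℕ) (a : A) : ℝ :=
  (τ ((star a * a) ^ (p / 2))).re ^ (1 / (p : ℝ))

/-!
Write `G_x(n) = τ((x*x)^n) = ‖x‖_{2n}^{2n}`. Cauchy–Schwarz for the positive form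
`(u, v) ↦ τ(u*v)` makes `n ↦ G_x(n)` log-convex with `G_x(0) = 1`, so `G_x(n)^{1/n}` is
nondecreasing and `‖ab‖_{2q} ≤ ‖ab‖_{2^q}` as `q ≤ 2^{q-1}`.

Hölder's inequality `G_{xy}(N)^2 ≤ G_x(2N) G_y(2N)` at dyadic `N = 2^j` is proved by strong
induction on `j`. With `h = x*x` and `k = yy*` one has `G_{xy}(2N) = τ((hk)^{2N})`, which
Cauchy–Schwarz bounds by `G_{(kh)^N}(1)`; the lower levels of the induction, applied to repeated
squares, bound this by `G_{kh}(N)`, and the inductive hypothesis for `k · h` gives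
`G_{kh}(N)^2 ≤ G_k(2N) G_h(2N) = G_y(4N) G_x(4N)`.
-/

theorem pow_succ_le_pow_of_sq_le_mul {f : ℕ → ℝ} (hf0 : f 0 ≤ 1) (hnn : ∀ n, 0 ≤ f n)
    (hf : ∀ n, f (n + 1) ^ 2 ≤ f n * f (n + 2)) (n : ℕ) :
    f n ^ (n + 1) ≤ f (n + 1) ^ n := by
  induction n with
  | zero => simpa using hf0
  | succ n ih =>
    rcases (hnn (n + 1)).eq_or_lt with hzero | hpos
    · rw [← hzero, zero_pow (by omega)]
      exact pow_nonneg (hnn _) _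
    refine le_of_mul_le_mul_left ?_ (pow_pos hpos n)
    calc f (n + 1) ^ n * f (n + 1) ^ (n + 1 + 1) = (f (n + 1) ^ 2) ^ (n + 1) := by ring
      _ ≤ (f n * f (n + 2)) ^ (n + 1) := pow_le_pow_left₀ (sq_nonneg _) (hf n) _
      _ = f n ^ (n + 1) * f (n + 2) ^ (n + 1) := mul_pow _ _ _
      _ ≤ f (n + 1) ^ n * f (n + 1 + 1) ^ (n + 1) :=
        mul_le_mul_of_nonneg_right ih (pow_nonneg (hnn _) _)

theorem pow_le_pow_of_sq_le_mul {f : ℕ → ℝ} (hf0 : f 0 ≤ 1) (hnn : ∀ n, 0 ≤ f n)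
    (hf : ∀ n, f (n + 1) ^ 2 ≤ f n * f (n + 2)) {n m : ℕ} (hnm : n ≤ m) :
    f n ^ m ≤ f m ^ n := by
  rcases n.eq_zero_or_pos with rfl | hn
  · simpa using pow_le_one₀ (hnn 0) hf0
  induction m, hnm using Nat.le_induction with
  | base => rfl
  | succ m hnm ih =>
    have hm : m ≠ 0 := (hn.trans_le hnm).ne'
    refine le_of_pow_le_pow_left₀ hm (pow_nonneg (hnn _) _) ?_
    calc (f n ^ (m + 1)) ^ m = (f n ^ m) ^ (m + 1) := by ring
      _ ≤ (f m ^ n) ^ (m + 1) := pow_le_pow_left₀ (pow_nonneg (hnn _) _) ih _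
      _ = (f m ^ (m + 1)) ^ n := by ring
      _ ≤ (f (m + 1) ^ m) ^ n :=
        pow_le_pow_left₀ (pow_nonneg (hnn _) _) (pow_succ_le_pow_of_sq_le_mul hf0 hnn hf m) _
      _ = (f (m + 1) ^ n) ^ m := by ring

theorem Real.rpow_one_div_le_of_pow_le {a b : ℝ} {m n : ℕ} (ha : 0 ≤ a) (hb : 0 ≤ b)
    (hm : m ≠ 0) (hn : n ≠ 0) (h : a ^ m ≤ b ^ n) :
    a ^ (1 / (n : ℝ)) ≤ b ^ (1 / (m : ℝ)) := by
  refine le_of_pow_le_pow_left₀ (mul_ne_zero hn hm) (by positivity) ?_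
  rwa [one_div, one_div, pow_mul, mul_comm, pow_mul, Real.rpow_inv_natCast_pow ha hn,
    Real.rpow_inv_natCast_pow hb hm]

section StarMonoid

variable {M : Type*} [Monoid M]

theorem apply_pow_mul_comm {β : Type*} (f : M → β) (hf : ∀ a b, f (a * b) = f (b * a))
    (a b : M) (n : ℕ) : f ((a * b) ^ n) = f ((b * a) ^ n) := by
  cases n with
  | zero => simp only [pow_zero]
  | succ n =>
    rw [pow_succ', mul_assoc, hf, mul_assoc, mul_pow_mul, ← mul_assoc, ← pow_succ']

theorem exists_star_mul_eq_pow [StarMul M] (x : M) (n : ℕ) :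
    ∃ u v : M, star u * u = (star x * x) ^ n ∧ star u * v = (star x * x) ^ (n + 1) ∧
      star v * v = (star x * x) ^ (n + 2) := by
  have hsa (k : ℕ) : star ((star x * x) ^ k) = (star x * x) ^ k := by
    rw [star_pow, star_mul, star_star]
  have hmul (k l : ℕ) : star (x * (star x * x) ^ k) * (x * (star x * x) ^ l) =
      (star x * x) ^ (k + l + 1) := by
    rw [star_mul, hsa, mul_assoc, ← mul_assoc (star x), ← pow_succ', ← pow_add, ← add_assoc]
  rcases n.even_or_odd' with ⟨m, rfl | rfl⟩
  · refine ⟨(star x * x) ^ m, (star x * x) ^ (m + 1), ?_, ?_, ?_⟩ <;>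
      (rw [hsa, ← pow_add]; congr 1; omega)
  · refine ⟨x * (star x * x) ^ m, x * (star x * x) ^ (m + 1), ?_, ?_, ?_⟩ <;>
      (rw [hmul]; congr 1; omega)

end StarMonoid

section PositiveFunctional

variable {A : Type*} [Ring A] [Algebra ℂ A] [StarRing A] [StarModule ℂ A]
  {τ : A →ₗ[ℂ] ℂ}

theorem conj_apply_star_mul (hpos : ∀ a, 0 ≤ τ (star a * a)) (x y : A) :
    starRingEnd ℂ (τ (star y * x)) = τ (star x * y) := by
  have hsum := (Complex.le_def.mp (hpos (x + y))).2
  have hrot := (Complex.le_def.mp (hpos (x + Complex.I • y))).2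
  simp only [star_add, star_smul, add_mul, mul_add, smul_mul_assoc, mul_smul_comm,
    map_add, map_smul, smul_eq_mul, Complex.star_def, Complex.conj_I, Complex.add_im,
    Complex.mul_im, Complex.mul_re, Complex.I_re, Complex.I_im, Complex.neg_re,
    Complex.neg_im] at hsum hrot
  have hx := (Complex.le_def.mp (hpos x)).2
  have hy := (Complex.le_def.mp (hpos y)).2
  simp only [Complex.zero_im] at hsum hrot hx hy
  apply Complex.ext <;> simp only [Complex.conj_re, Complex.conj_im] <;> linarith

abbrev preInnerProductCore (hpos : ∀ a, 0 ≤ τ (star a * a)) :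
    PreInnerProductSpace.Core ℂ A where
  inner x y := τ (star x * y)
  conj_inner_symm := conj_apply_star_mul hpos
  re_inner_nonneg x := (Complex.le_def.mp (hpos x)).1
  add_left x y z := by simp only [star_add, add_mul, map_add]
  smul_left x y r := by simp only [star_smul, smul_mul_assoc, map_smul, smul_eq_mul]; rfl

theorem sq_re_apply_star_mul_le (hpos : ∀ a, 0 ≤ τ (star a * a)) (u v : A) :
    (τ (star u * v)).re ^ 2 ≤ (τ (star u * u)).re * (τ (star v * v)).re := by
  let _ : PreInnerProductSpace.Core ℂ A := preInnerProductCore hpos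
  calc (τ (star u * v)).re ^ 2 ≤ ‖τ (star u * v)‖ * ‖τ (star v * u)‖ := by
        rw [← conj_apply_star_mul hpos v u, Complex.norm_conj, ← sq, ← sq_abs]
        exact pow_le_pow_left₀ (abs_nonneg _) (Complex.abs_re_le_norm _) 2
    _ ≤ _ := InnerProductSpace.Core.inner_mul_inner_self_le (𝕜 := ℂ) u v

end PositiveFunctional

section TraceMoment

variable {A : Type*} [Ring A] [Algebra ℂ A] [StarRing A]

/-- `traceMoment τ x n = ‖x‖_{2n}^{2n}`. -/
def traceMoment (τ : A →ₗ[ℂ] ℂ) (x : A) (n : ℕ) : ℝ := (τ ((star x * x) ^ n)).re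

variable {τ : A →ₗ[ℂ] ℂ}

theorem pnorm_eq_traceMoment [StarModule ℂ A] (p : ℕ) (x : A) :
    pnorm τ p x = traceMoment τ x (p / 2) ^ (1 / (p : ℝ)) := rfl

theorem traceMoment_zero (h1 : τ 1 = 1) (x : A) : traceMoment τ x 0 = 1 := by
  simp [traceMoment, h1]

theorem traceMoment_one (x : A) : traceMoment τ x 1 = (τ (star x * x)).re := by
  rw [traceMoment, pow_one]

theorem traceMoment_star_mul_self (x : A) (n : ℕ) :
    traceMoment τ (star x * x) n = traceMoment τ x (2 * n) := by
  simp only [traceMoment, star_mul, star_star, ← sq, pow_mul]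

theorem traceMoment_star (htr : ∀ a b, τ (a * b) = τ (b * a)) (x : A) (n : ℕ) :
    traceMoment τ (star x) n = traceMoment τ x n := by
  rw [traceMoment, traceMoment, star_star, apply_pow_mul_comm τ htr]

theorem traceMoment_mul_star_self (htr : ∀ a b, τ (a * b) = τ (b * a)) (x : A) (n : ℕ) :
    traceMoment τ (x * star x) n = traceMoment τ x (2 * n) := by
  rw [← traceMoment_star htr x, ← traceMoment_star_mul_self, star_star]

theorem traceMoment_mul (htr : ∀ a b, τ (a * b) = τ (b * a)) (x y : A) (n : ℕ) :
    traceMoment τ (x * y) n = (τ ((star x * x * (y * star y)) ^ n)).re := by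
  rw [traceMoment, star_mul, mul_assoc, apply_pow_mul_comm τ htr, mul_assoc, mul_assoc, mul_assoc]

theorem traceMoment_nonneg (hpos : ∀ a, 0 ≤ τ (star a * a)) (x : A) (n : ℕ) :
    0 ≤ traceMoment τ x n := by
  obtain ⟨u, -, hu, -, -⟩ := exists_star_mul_eq_pow x n
  exact (Complex.le_def.mp (hu ▸ hpos u)).1

theorem sq_traceMoment_succ_le [StarModule ℂ A] (hpos : ∀ a, 0 ≤ τ (star a * a))
    (x : A) (n : ℕ) :
    traceMoment τ x (n + 1) ^ 2 ≤ traceMoment τ x n * traceMoment τ x (n + 2) := by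
  obtain ⟨u, v, hu, huv, hv⟩ := exists_star_mul_eq_pow x n
  simpa only [traceMoment, hu, huv, hv] using sq_re_apply_star_mul_le hpos u v

theorem pnorm_le_pnorm [StarModule ℂ A] (h1 : τ 1 = 1) (hpos : ∀ a, 0 ≤ τ (star a * a))
    {p q : ℕ} (hp : Even p) (hp0 : 0 < p) (hq : Even q) (hpq : p ≤ q) (x : A) :
    pnorm τ p x ≤ pnorm τ q x := by
  obtain ⟨n, rfl⟩ := hp
  obtain ⟨m, rfl⟩ := hq
  rw [pnorm_eq_traceMoment, pnorm_eq_traceMoment, ← two_mul, ← two_mul,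
    Nat.mul_div_cancel_left _ two_pos, Nat.mul_div_cancel_left _ two_pos]
  refine Real.rpow_one_div_le_of_pow_le (traceMoment_nonneg hpos _ _)
    (traceMoment_nonneg hpos _ _) (by omega) (by omega) ?_
  rw [pow_mul', pow_mul']
  refine pow_le_pow_left₀ (pow_nonneg (traceMoment_nonneg hpos _ _) _) ?_ 2
  exact pow_le_pow_of_sq_le_mul (traceMoment_zero h1 x).le (traceMoment_nonneg hpos x)
    (sq_traceMoment_succ_le hpos x) (by omega)

end TraceMoment

section Holder

variable {A : Type*} [Ring A] [Algebra ℂ A] [StarRing A] {τ : A →ₗ[ℂ] ℂ}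

/-- Hölder's inequality `‖xy‖_{2N} ≤ ‖x‖_{4N} ‖y‖_{4N}` for `N = 2^j`, raised to the
power `4N`. -/
def DyadicHolder (τ : A →ₗ[ℂ] ℂ) (j : ℕ) : Prop :=
  ∀ x y : A, traceMoment τ (x * y) (2 ^ j) ^ 2 ≤
    traceMoment τ x (2 ^ (j + 1)) * traceMoment τ y (2 ^ (j + 1))

theorem DyadicHolder.traceMoment_sq_le (hpos : ∀ a, 0 ≤ τ (star a * a)) {j : ℕ}
    (h : DyadicHolder τ j) (z : A) :
    traceMoment τ (z ^ 2) (2 ^ j) ≤ traceMoment τ z (2 ^ (j + 1)) := by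
  refine le_of_pow_le_pow_left₀ two_ne_zero (traceMoment_nonneg hpos _ _) ?_
  rw [sq z, sq (traceMoment τ z _)]
  exact h z z

theorem traceMoment_pow_two_pow_le (hpos : ∀ a, 0 ≤ τ (star a * a)) {i : ℕ}
    (h : ∀ s < i, DyadicHolder τ s) (z : A) :
    traceMoment τ (z ^ 2 ^ i) 1 ≤ traceMoment τ z (2 ^ i) := by
  induction i generalizing z with
  | zero => rw [pow_zero, pow_one]
  | succ i ih =>
    calc traceMoment τ (z ^ 2 ^ (i + 1)) 1 = traceMoment τ ((z ^ 2) ^ 2 ^ i) 1 := by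
          rw [← pow_mul, ← pow_succ']
      _ ≤ traceMoment τ (z ^ 2) (2 ^ i) := ih (fun s hs ↦ h s (by omega)) _
      _ ≤ traceMoment τ z (2 ^ (i + 1)) := (h i i.lt_succ_self).traceMoment_sq_le hpos z

theorem dyadicHolder_zero [StarModule ℂ A] (hτ : IsTrace τ) : DyadicHolder τ 0 := by
  intro x y
  have hcs := sq_re_apply_star_mul_le hτ.2.1 (star x * x) (y * star y)
  rw [← traceMoment_one, ← traceMoment_one, traceMoment_star_mul_self,
    traceMoment_mul_star_self hτ.2.2, star_mul, star_star] at hcs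
  rwa [pow_zero, traceMoment_mul hτ.2.2, pow_one]

theorem traceMoment_two_mul_le [StarModule ℂ A] (hτ : IsTrace τ) (x y : A) (n : ℕ) :
    traceMoment τ (x * y) (2 * n) ≤ traceMoment τ ((y * star y * (star x * x)) ^ n) 1 := by
  set u := (y * star y * (star x * x)) ^ n
  have hu : star u = (star x * x * (y * star y)) ^ n := by
    simp only [u, star_pow, star_mul, star_star, mul_assoc]
  have hcs := sq_re_apply_star_mul_le hτ.2.1 u (star u)
  rw [star_star, hτ.2.2 u (star u), ← traceMoment_one, ← sq (traceMoment τ u 1)] at hcs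
  refine le_of_pow_le_pow_left₀ two_ne_zero (traceMoment_nonneg hτ.2.1 _ _) ?_
  rwa [traceMoment_mul hτ.2.2, two_mul, pow_add, ← hu]

theorem dyadicHolder_succ [StarModule ℂ A] (hτ : IsTrace τ) {i : ℕ}
    (h : ∀ s ≤ i, DyadicHolder τ s) :
    DyadicHolder τ (i + 1) := by
  intro x y
  have hpow :=
    traceMoment_pow_two_pow_le hτ.2.1 (fun s hs ↦ h s hs.le) (y * star y * (star x * x))
  have hi := h i le_rfl (y * star y) (star x * x)
  rw [traceMoment_mul_star_self hτ.2.2, traceMoment_star_mul_self, ← pow_succ', mul_comm] at hi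
  calc traceMoment τ (x * y) (2 ^ (i + 1)) ^ 2
      ≤ traceMoment τ (y * star y * (star x * x)) (2 ^ i) ^ 2 := by
        refine pow_le_pow_left₀ (traceMoment_nonneg hτ.2.1 _ _) ?_ 2
        rw [pow_succ']
        exact (traceMoment_two_mul_le hτ x y _).trans hpow
    _ ≤ _ := hi

theorem dyadicHolder [StarModule ℂ A] (hτ : IsTrace τ) (j : ℕ) : DyadicHolder τ j := by
  induction j using Nat.strong_induction_on with
  | _ j ih =>
    cases j with
    | zero => exact dyadicHolder_zero hτ
    | succ i => exact dyadicHolder_succ hτ fun s hs ↦ ih s (Nat.lt_succ_of_le hs)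

theorem pnorm_mul_le [StarModule ℂ A] (hτ : IsTrace τ) (j : ℕ) (x y : A) :
    pnorm τ (2 ^ (j + 1)) (x * y) ≤ pnorm τ (2 ^ (j + 2)) x * pnorm τ (2 ^ (j + 2)) y := by
  have hhalf (k : ℕ) : 2 ^ (k + 1) / 2 = 2 ^ k := by rw [pow_succ, Nat.mul_div_cancel _ two_pos]
  have hnn := traceMoment_nonneg hτ.2.1 (τ := τ)
  rw [pnorm_eq_traceMoment, pnorm_eq_traceMoment, pnorm_eq_traceMoment, hhalf, hhalf,
    ← Real.mul_rpow (hnn _ _) (hnn _ _)]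
  refine Real.rpow_one_div_le_of_pow_le (hnn _ _) (mul_nonneg (hnn _ _) (hnn _ _))
    (by positivity) (by positivity) ?_
  rw [pow_succ 2 (j + 1), pow_mul']
  exact pow_le_pow_left₀ (sq_nonneg _) (dyadicHolder hτ j x y) _

end Holder

/-- Hölder type inequality.  For a tracial `*`-algebra `(A,τ)`,
an even positive integer `p` and `a, b ∈ A`,
`‖ab‖_p ≤ ‖a‖_{φ(p+4)} ‖b‖_{φ(p+4)}` (where `φ(p+4) = 2^{p/2+1}`). -/
theorem hoelder_type_inequality
    {A : Type*} [Ring A] [Algebra ℂ A] [StarRing A] [StarModule ℂ A]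
    (τ : A →ₗ[ℂ] ℂ) (hτ : IsTrace τ)
    (p : ℕ) (hp : Even p) (hp0 : 0 < p) (a b : A) :
    pnorm τ p (a * b) ≤ pnorm τ (phi (p + 4)) a * pnorm τ (phi (p + 4)) b := by
  obtain ⟨r, rfl⟩ : ∃ r, p = 2 * (r + 1) := by
    obtain ⟨q, rfl⟩ := hp
    exact ⟨q - 1, by omega⟩
  have hphi : phi (2 * (r + 1) + 4) = 2 ^ (r + 2) := by
    rw [phi, if_pos ⟨r + 3, by omega⟩]
    congr 1
    omega
  have hle : 2 * (r + 1) ≤ 2 ^ (r + 1) := by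
    have := r.lt_two_pow_self
    rw [pow_succ]
    omega
  rw [hphi]
  calc pnorm τ (2 * (r + 1)) (a * b) ≤ pnorm τ (2 ^ (r + 1)) (a * b) :=
        pnorm_le_pnorm hτ.1 hτ.2.1 (even_two_mul _) (by omega)
          (Nat.even_pow.mpr ⟨even_two, r.succ_ne_zero⟩) hle _
    _ ≤ _ := pnorm_mul_le hτ r a b
end
end

section
/- Let (A,τ) be a tracial *-algebra. For every even positive integer p and all a, b ∈ A, ‖a + b‖_p ≤ ‖a‖_{ψ(p)} + ‖b‖_{ψ(p)}, where ψ(p) := φ(2φ(p/2) + 4) and φ(m) = 2^{m/2−1} for even m, φ(m) = φ(m+1) = 2^{(m+1)/2−1} for odd m. -/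
/-!
Write `p = 2m`. Expanding `((a + b)^* (a + b))^m` gives a sum of words `w₁ ⋯ w_m` with letters
`wᵢ = x^* y`, `x, y ∈ {a, b}`. Cauchy–Schwarz for the positive form `(x, y) ↦ τ(x^* y)`, applied
to the two halves of a word, and then Hölder's inequality
`‖y z‖_{2^(t+1)} ≤ ‖y‖_{2^(t+2)} ‖z‖_{2^(t+2)}` along each half bound `Re τ(w₁ ⋯ w_m)` by
`∏ ‖wᵢ‖_{2^r}` as soon as `m ≤ 2r`; one more Hölder step splits each letter, and summing over
all words gives `(‖a‖ + ‖b‖)^p`. The exponent `ψ(p) = 2^(φ(m) + 1)` is large enough because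
`m ≤ 2 φ(m)`.

Hölder's inequality is, up to cyclicity of `τ`, the sharp estimate
`(Re τ((x y)^(2^t)))² ≤ τ(x^(2^(t+1))) τ(y^(2^(t+1)))` for self-adjoint `x, y`. Its step from
`t` to `t + 1` is Cauchy–Schwarz followed by the Araki–Lieb–Thirring type inequality
`τ((a^{*n} aⁿ)^(2^k)) ≤ τ((a^* a)^(n 2^k))` for `n = 2^t`, `k = 0`, which is proved by induction on
`log₂ n` from the estimate at levels below `t`; so both are proved by one strong induction.
-/

open scoped ComplexOrder

noncomputable section

/-- `ψ(p) = φ(2φ(p/2) + 4)`. -/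
def psi (p : ℕ) : ℕ := phi (2 * phi (p / 2) + 4)

theorem sum_pow_eq_sum_list_prod_ofFn {R κ : Type*} [Semiring R] [Fintype κ] (y : κ → R)
    (m : ℕ) : (∑ j, y j) ^ m = ∑ f : Fin m → κ, (List.ofFn fun i => y (f i)).prod := by
  induction m with
  | zero => simp
  | succ m ih =>
    rw [pow_succ', ih, Finset.sum_mul_sum, ← Fintype.sum_prod_type']
    exact Fintype.sum_equiv (Fin.consEquiv fun _ => κ) _ _ fun q => by simp [List.ofFn_succ]

def TracePowCauchySchwarz {A : Type*} [Ring A] [Algebra ℂ A] [StarRing A] (τ : A →ₗ[ℂ] ℂ)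
    (t : ℕ) : Prop :=
  ∀ x y : A, IsSelfAdjoint x → IsSelfAdjoint y →
    (τ ((x * y) ^ 2 ^ t)).re ^ 2 ≤ (τ (x ^ 2 ^ (t + 1))).re * (τ (y ^ 2 ^ (t + 1))).re

set_option linter.unusedSectionVars false

namespace IsTrace

variable {A : Type*} [Ring A] [Algebra ℂ A] [StarRing A] [StarModule ℂ A]
  {τ : A →ₗ[ℂ] ℂ} (hτ : IsTrace τ)
include hτ

theorem trace_mul_comm (x y : A) : τ (x * y) = τ (y * x) := hτ.2.2 x y

theorem trace_mul_pow_comm (x y : A) (n : ℕ) : τ ((x * y) ^ n) = τ ((y * x) ^ n) := by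
  cases n with
  | zero => simp
  | succ n =>
    calc τ ((x * y) ^ (n + 1)) = τ ((x * y) ^ n * x * y) := by rw [pow_succ, mul_assoc]
      _ = τ (y * ((x * y) ^ n * x)) := hτ.trace_mul_comm _ _
      _ = τ ((y * x) ^ (n + 1)) := by rw [mul_pow_mul, ← mul_assoc, ← pow_succ']

theorem re_trace_star_mul_self_nonneg (x : A) : 0 ≤ (τ (star x * x)).re :=
  (Complex.nonneg_iff.1 (hτ.2.1 x)).1

theorem im_trace_star_mul_self (x : A) : (τ (star x * x)).im = 0 :=
  (Complex.nonneg_iff.1 (hτ.2.1 x)).2.symm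

theorem re_trace_star_mul_comm (x y : A) : (τ (star y * x)).re = (τ (star x * y)).re := by
  have h := hτ.im_trace_star_mul_self (x + Complex.I • y)
  simp only [star_add, star_smul, add_mul, mul_add, smul_mul_assoc, mul_smul_comm, map_add,
    map_smul, smul_eq_mul, RCLike.star_def, Complex.conj_I, Complex.add_im, Complex.mul_im,
    Complex.neg_re, Complex.neg_im, Complex.mul_re, Complex.I_re, Complex.I_im,
    hτ.im_trace_star_mul_self] at h
  linarith [hτ.im_trace_star_mul_self y]

theorem sq_re_trace_star_mul_le (x y : A) :
    (τ (star x * y)).re ^ 2 ≤ (τ (star x * x)).re * (τ (star y * y)).re := by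
  have hquad : ∀ t : ℝ, 0 ≤ (τ (star y * y)).re * (t * t) + 2 * (τ (star x * y)).re * t
      + (τ (star x * x)).re := by
    intro t
    have h := hτ.re_trace_star_mul_self_nonneg (x + (t : ℂ) • y)
    simp only [star_add, star_smul, add_mul, mul_add, smul_mul_assoc, mul_smul_comm, map_add,
      map_smul, smul_eq_mul, RCLike.star_def, Complex.conj_ofReal, Complex.add_re, Complex.mul_re,
      Complex.ofReal_re, Complex.ofReal_im, hτ.im_trace_star_mul_self] at h
    rw [hτ.re_trace_star_mul_comm x y] at h
    linarith
  have hdisc := discrim_le_zero hquad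
  rw [discrim] at hdisc
  nlinarith

theorem re_trace_star_mul_self_pow_nonneg (x : A) (n : ℕ) :
    0 ≤ (τ ((star x * x) ^ n)).re := by
  obtain ⟨k, rfl | rfl⟩ := Nat.even_or_odd' n
  · have h : (star x * x) ^ (2 * k) = star ((star x * x) ^ k) * (star x * x) ^ k := by
      rw [star_pow, star_mul, star_star, ← pow_add, two_mul]
    rw [h]
    exact hτ.re_trace_star_mul_self_nonneg _
  · have h : (star x * x) ^ (2 * k + 1) = star (x * (star x * x) ^ k) * (x * (star x * x) ^ k) := by
      rw [star_mul, star_pow, star_mul, star_star, mul_assoc, ← mul_assoc (star x) x, ← pow_succ',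
        ← pow_add]
      ring_nf
    rw [h]
    exact hτ.re_trace_star_mul_self_nonneg _

theorem tracePowCauchySchwarz_zero : TracePowCauchySchwarz τ 0 := by
  intro x y hx hy
  have hcs := hτ.sq_re_trace_star_mul_le x y
  rw [hx.star_eq, hy.star_eq] at hcs
  simpa [sq] using hcs

theorem re_trace_star_pow_mul_pow_pow_le {i k : ℕ}
    (hS : ∀ j < i + k, TracePowCauchySchwarz τ j) (a : A) :
    (τ ((star a ^ 2 ^ i * a ^ 2 ^ i) ^ 2 ^ k)).re ≤ (τ ((star a * a) ^ 2 ^ (i + k))).re := by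
  induction i generalizing k with
  | zero => simp
  | succ i ih =>
    set X := star a ^ 2 ^ i * a ^ 2 ^ i
    set Y := a ^ 2 ^ i * star a ^ 2 ^ i
    have hX : X = star (a ^ 2 ^ i) * a ^ 2 ^ i := by rw [star_pow]
    have hY : Y = star (star a ^ 2 ^ i) * star a ^ 2 ^ i := by rw [star_pow, star_star]
    have hXY : τ ((X * Y) ^ 2 ^ k) = τ ((star a ^ 2 ^ (i + 1) * a ^ 2 ^ (i + 1)) ^ 2 ^ k) := by
      have h2 : ∀ b : A, b ^ 2 ^ (i + 1) = b ^ 2 ^ i * b ^ 2 ^ i := fun b => by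
        rw [pow_succ, pow_mul, sq]
      rw [show X * Y = star a ^ 2 ^ i * (a ^ 2 ^ i * a ^ 2 ^ i * star a ^ 2 ^ i) by
          simp only [X, Y, mul_assoc],
        hτ.trace_mul_pow_comm, mul_assoc, ← h2, ← h2, hτ.trace_mul_pow_comm]
    have hcs := hS k (by omega) X Y (hX ▸ .star_mul_self _) (hY ▸ .star_mul_self _)
    rw [hXY, hτ.trace_mul_pow_comm (a ^ 2 ^ i), ← sq] at hcs
    have hX0 : 0 ≤ (τ (X ^ 2 ^ (k + 1))).re := hX ▸ hτ.re_trace_star_mul_self_pow_nonneg _ _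
    calc _ ≤ (τ (X ^ 2 ^ (k + 1))).re := le_of_sq_le_sq hcs hX0
      _ ≤ (τ ((star a * a) ^ 2 ^ (i + 1 + k))).re := by
        rw [show i + 1 + k = i + (k + 1) by omega]
        exact ih fun j hj => hS j (by omega)

theorem tracePowCauchySchwarz_succ {t : ℕ} (hS : ∀ j ≤ t, TracePowCauchySchwarz τ j) :
    TracePowCauchySchwarz τ (t + 1) := by
  intro x y hx hy
  set Z := (x * y) ^ 2 ^ t
  have hZZ : (x * y) ^ 2 ^ (t + 1) = star (star Z) * Z := by rw [star_star, pow_succ, pow_mul, sq]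
  have hcs : (τ ((x * y) ^ 2 ^ (t + 1))).re ^ 2 ≤ (τ (star Z * Z)).re ^ 2 := by
    have hZcs := hτ.sq_re_trace_star_mul_le (star Z) Z
    rwa [← hZZ, star_star, hτ.trace_mul_comm Z, ← sq] at hZcs
  have hZ : (τ (star Z * Z)).re ≤ (τ ((x ^ 2 * y ^ 2) ^ 2 ^ t)).re := by
    have hZle := hτ.re_trace_star_pow_mul_pow_pow_le (i := t) (k := 0)
      (fun j hj => hS j (by omega)) (x * y)
    rwa [pow_zero, pow_one, add_zero, ← star_pow, star_mul, hx.star_eq, hy.star_eq,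
      show y * x * (x * y) = y * (x ^ 2 * y) by noncomm_ring, hτ.trace_mul_pow_comm, mul_assoc,
      ← sq] at hZle
  have hsq := hS t le_rfl (x ^ 2) (y ^ 2) (hx.pow 2) (hy.pow 2)
  rw [← pow_mul, ← pow_mul, ← pow_succ'] at hsq
  calc _ ≤ (τ (star Z * Z)).re ^ 2 := hcs
    _ ≤ (τ ((x ^ 2 * y ^ 2) ^ 2 ^ t)).re ^ 2 :=
      pow_le_pow_left₀ (hτ.re_trace_star_mul_self_nonneg Z) hZ 2
    _ ≤ _ := hsq

theorem tracePowCauchySchwarz (t : ℕ) : TracePowCauchySchwarz τ t := by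
  induction t using Nat.strong_induction_on with
  | _ t ih =>
    cases t with
    | zero => exact hτ.tracePowCauchySchwarz_zero
    | succ t => exact hτ.tracePowCauchySchwarz_succ fun j hj => ih j (Nat.lt_succ_of_le hj)

theorem pnorm_nonneg (q : ℕ) (x : A) : 0 ≤ pnorm τ q x :=
  Real.rpow_nonneg (hτ.re_trace_star_mul_self_pow_nonneg x _) _

theorem pnorm_le_iff {q : ℕ} (hq : q ≠ 0) {x : A} {c : ℝ} (hc : 0 ≤ c) :
    pnorm τ q x ≤ c ↔ (τ ((star x * x) ^ (q / 2))).re ≤ c ^ q := by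
  rw [pnorm, one_div, Real.rpow_inv_le_iff_of_pos (hτ.re_trace_star_mul_self_pow_nonneg x _) hc
    (by positivity), Real.rpow_natCast]

theorem pnorm_two_pow_succ_pow (t : ℕ) (x : A) :
    pnorm τ (2 ^ (t + 1)) x ^ 2 ^ (t + 1) = (τ ((star x * x) ^ 2 ^ t)).re := by
  rw [pnorm, one_div, Real.rpow_inv_natCast_pow (hτ.re_trace_star_mul_self_pow_nonneg x _)
    (by positivity), pow_succ, Nat.mul_div_cancel _ two_pos]

theorem pnorm_one (q : ℕ) : pnorm τ q (1 : A) = 1 := by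
  simp [pnorm, hτ.1]

theorem pnorm_star (q : ℕ) (x : A) : pnorm τ q (star x) = pnorm τ q x := by
  rw [pnorm, pnorm, star_star, hτ.trace_mul_pow_comm]

theorem pnorm_two_pow_succ_mul_le (t : ℕ) (y z : A) :
    pnorm τ (2 ^ (t + 1)) (y * z) ≤ pnorm τ (2 ^ (t + 2)) y * pnorm τ (2 ^ (t + 2)) z := by
  refine le_of_pow_le_pow_left₀ (n := 2 ^ (t + 2)) (by positivity)
    (mul_nonneg (hτ.pnorm_nonneg _ _) (hτ.pnorm_nonneg _ _)) ?_
  rw [mul_pow, hτ.pnorm_two_pow_succ_pow (t + 1), hτ.pnorm_two_pow_succ_pow (t + 1),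
    pow_succ 2 (t + 1), pow_mul, hτ.pnorm_two_pow_succ_pow, star_mul,
    hτ.trace_mul_pow_comm (star z) z,
    show star z * star y * (y * z) = star z * (star y * y * z) by simp only [mul_assoc],
    hτ.trace_mul_pow_comm (star z), mul_assoc]
  exact hτ.tracePowCauchySchwarz t _ _ (.star_mul_self y) (.mul_star_self z)

theorem pnorm_two_pow_succ_mono (x : A) : Monotone fun t => pnorm τ (2 ^ (t + 1)) x :=
  monotone_nat_of_le_succ fun t => by simpa [hτ.pnorm_one] using hτ.pnorm_two_pow_succ_mul_le t x 1

theorem pnorm_list_prod_le {t r : ℕ} (l : List A) (hl : t + l.length ≤ r + 1) :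
    pnorm τ (2 ^ (t + 1)) l.prod ≤ (l.map (pnorm τ (2 ^ (r + 1)))).prod := by
  induction l generalizing t with
  | nil => simp [hτ.pnorm_one]
  | cons z l ih =>
    simp only [List.length_cons] at hl
    rcases eq_or_ne l [] with rfl | hne
    · simpa using hτ.pnorm_two_pow_succ_mono z (by omega : t ≤ r)
    · have hlen : 0 < l.length := List.length_pos_iff.2 hne
      rw [List.prod_cons, List.map_cons, List.prod_cons]
      exact (hτ.pnorm_two_pow_succ_mul_le t z _).trans <|
        mul_le_mul (hτ.pnorm_two_pow_succ_mono z (by omega : t + 1 ≤ r)) (ih (by omega))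
          (hτ.pnorm_nonneg _ _) (hτ.pnorm_nonneg _ _)

theorem re_trace_mul_le (x y : A) : (τ (x * y)).re ≤ pnorm τ 2 x * pnorm τ 2 y := by
  have hsq (x : A) : pnorm τ 2 x ^ 2 = (τ (star x * x)).re := by
    simpa using hτ.pnorm_two_pow_succ_pow 0 x
  have hcs := hτ.sq_re_trace_star_mul_le (star x) y
  rw [star_star, hτ.trace_mul_comm x (star x), ← hsq, ← hsq, ← mul_pow] at hcs
  exact le_of_sq_le_sq hcs (mul_nonneg (hτ.pnorm_nonneg _ _) (hτ.pnorm_nonneg _ _))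

theorem re_trace_list_prod_le {r : ℕ} (l : List A) (hl : l.length ≤ 2 * (r + 1)) :
    (τ l.prod).re ≤ (l.map (pnorm τ (2 ^ (r + 1)))).prod := by
  rw [← l.take_append_drop (r + 1), List.prod_append, List.map_append, List.prod_append]
  refine (hτ.re_trace_mul_le _ _).trans <| mul_le_mul ?_ ?_ (hτ.pnorm_nonneg _ _) <|
    List.prod_nonneg fun _ hc => ?_
  · simpa using hτ.pnorm_list_prod_le (t := 0) (l.take (r + 1)) (by simp)
  · simpa using hτ.pnorm_list_prod_le (t := 0) (l.drop (r + 1)) (by simp; omega)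
  · obtain ⟨z, -, rfl⟩ := List.mem_map.1 hc
    exact hτ.pnorm_nonneg _ _

theorem pnorm_sum_le {ι : Type*} [Fintype ι] (a : ι → A) {m r : ℕ} (hm : 0 < m)
    (hmr : m ≤ 2 * r) : pnorm τ (2 * m) (∑ i, a i) ≤ ∑ i, pnorm τ (2 ^ (r + 1)) (a i) := by
  obtain ⟨r, rfl⟩ : ∃ r', r = r' + 1 := ⟨r - 1, by omega⟩
  set N := fun i => pnorm τ (2 ^ (r + 2)) (a i)
  have hN (i : ι) : 0 ≤ N i := hτ.pnorm_nonneg _ _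
  have hword (f : Fin m → ι × ι) :
      (τ (List.ofFn fun n => star (a (f n).1) * a (f n).2).prod).re
        ≤ ∏ n, N (f n).1 * N (f n).2 := by
    refine (hτ.re_trace_list_prod_le _ (by simpa using hmr)).trans ?_
    rw [List.map_ofFn, List.prod_ofFn]
    refine Finset.prod_le_prod (fun n _ => hτ.pnorm_nonneg _ _) fun n _ => ?_
    have hholder := hτ.pnorm_two_pow_succ_mul_le r (star (a (f n).1)) (a (f n).2)
    rwa [hτ.pnorm_star] at hholder
  rw [hτ.pnorm_le_iff (by omega) (Finset.sum_nonneg fun i _ => hN i),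
    Nat.mul_div_cancel_left _ two_pos, pow_mul]
  calc (τ ((star (∑ i, a i) * ∑ i, a i) ^ m)).re
      = ∑ f : Fin m → ι × ι, (τ (List.ofFn fun n => star (a (f n).1) * a (f n).2).prod).re := by
        rw [star_sum, Finset.sum_mul_sum, ← Fintype.sum_prod_type',
          sum_pow_eq_sum_list_prod_ofFn, map_sum, Complex.re_sum]
    _ ≤ ∑ f : Fin m → ι × ι, ∏ n, N (f n).1 * N (f n).2 := Finset.sum_le_sum fun f _ => hword f
    _ = ((∑ i, N i) ^ 2) ^ m := by
        rw [sq, Finset.sum_mul_sum, ← Fintype.sum_prod_type', Fintype.sum_pow]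

end IsTrace

theorem phi_eq (m : ℕ) : phi m = 2 ^ ((m + 1) / 2 - 1) := by
  unfold phi
  split_ifs with hm
  · obtain ⟨k, rfl⟩ := hm
    congr 1
    omega
  · rfl

theorem psi_two_mul (m : ℕ) : psi (2 * m) = 2 ^ (phi m + 1) := by
  rw [psi, Nat.mul_div_cancel_left _ two_pos, phi_eq]
  congr 1
  omega

theorem le_two_mul_phi (m : ℕ) : m ≤ 2 * phi m := by
  have hlt := Nat.lt_two_pow_self (n := (m + 1) / 2 - 1)
  rw [phi_eq]
  omega

/-- Minkowski type inequality.  For a tracial `*`-algebra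
`(A,τ)`, an even positive integer `p` and `a, b ∈ A`,
`‖a+b‖_p ≤ ‖a‖_{ψ(p)} + ‖b‖_{ψ(p)}` where `ψ(p) = φ(2φ(p/2)+4)`. -/
theorem minkowski_type_inequality
    {A : Type*} [Ring A] [Algebra ℂ A] [StarRing A] [StarModule ℂ A]
    (τ : A →ₗ[ℂ] ℂ) (hτ : IsTrace τ)
    (p : ℕ) (hp : Even p) (hp0 : 0 < p) (a b : A) :
    pnorm τ p (a + b) ≤ pnorm τ (psi p) a + pnorm τ (psi p) b := by
  obtain ⟨m, rfl⟩ := hp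
  rw [← two_mul, psi_two_mul]
  simpa using hτ.pnorm_sum_le ![a, b] (by omega) (le_two_mul_phi m)
end
end

section
/- Let k ≥ 1 and P ∈ J_k. Then every nonzero homogeneous part of P has degree at least 2k; in particular every nonzero element of J_k has degree at least 2k. -/
/-!
Let `w` be a word of length `d < 2k`. Substitute for each variable `xᵢ` the matrix
`∑ Xₛ E(⌊s/2⌋, ⌈s/2⌉)` over the positions `s` of `w` carrying the letter `i`, where the `Xₛ` are
commuting indeterminates: the matrix units form a staircase `(0,0), (0,1), (1,1), (1,2), …` of
`d` steps inside `k × k` matrices. The only way to walk the staircase from row `0` to column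
`⌊d/2⌋` using every step exactly once is in order, so the coefficient of `X₀ ⋯ X_{d-1}` in that
entry of `P(x)` is the coefficient of `w` in `P`. Since `P ∈ J_k` vanishes on all complex, hence
on all polynomial, `k × k` matrices, that coefficient is zero.
-/

noncomputable section

/-- The homogeneous part of degree `d` of a non-commutative polynomial. -/
def homPart {X : Type} (d : ℕ) (P : FA X) : FA X :=
  (FreeAlgebra.equivMonoidAlgebraFreeMonoid (R := ℂ) (X := X)).symm
    (MonoidAlgebra.ofCoeff ((coefficient P).filter fun w : FreeMonoid X => FreeMonoid.length w = d))

section Evaluation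

variable {X : Type} {A : Type*} [Semiring A] [Algebra ℂ A]

theorem lift_eq_sum_coefficient (b : X → A) (P : FA X) :
    FreeAlgebra.lift ℂ b P = (coefficient P).sum fun w c => c • FreeMonoid.lift b w := by
  have h : (MonoidAlgebra.lift ℂ A (FreeMonoid X) (FreeMonoid.lift b)).comp
      FreeAlgebra.equivMonoidAlgebraFreeMonoid.toAlgHom = FreeAlgebra.lift ℂ b := by
    ext x
    simp [FreeAlgebra.equivMonoidAlgebraFreeMonoid, MonoidAlgebra.lift_single]
  simpa [coefficient, MonoidAlgebra.lift_apply] using (DFunLike.congr_fun h P).symm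

theorem AlgHom.apply_lift {B : Type*} [Semiring B] [Algebra ℂ B] (f : A →ₐ[ℂ] B) (b : X → A)
    (P : FA X) : f (FreeAlgebra.lift ℂ b P) = FreeAlgebra.lift ℂ (f ∘ b) P := by
  have h : f.comp (FreeAlgebra.lift ℂ b) = FreeAlgebra.lift ℂ (f ∘ b) := by ext; simp
  exact DFunLike.congr_fun h P

theorem coefficient_eq_zero_iff {P : FA X} : coefficient P = 0 ↔ P = 0 := by
  rw [coefficient, ← MonoidAlgebra.coeff_zero, MonoidAlgebra.coeff_inj,
    map_eq_zero_iff _ (AlgEquiv.injective _)]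

end Evaluation

section Vanishing

open scoped ComplexStarModule

variable {X ι : Type} [Fintype ι] [DecidableEq ι]

theorem Polynomial.eq_zero_of_forall_eval_ofReal {p : Polynomial ℂ}
    (h : ∀ t : ℝ, p.eval (t : ℂ) = 0) : p = 0 :=
  p.eq_zero_of_infinite_isRoot <| Set.infinite_of_injective_forall_mem
    Complex.ofReal_injective h

/-- Writing `b = ℜ b + I • ℑ b`, each entry of `P(ℜ b + t • ℑ b)` is a polynomial in `t` which
vanishes for real `t`, hence also at `t = I`. -/
theorem lift_eq_zero_of_forall_isSelfAdjoint {P : FA X}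
    (hP : ∀ a : X → Matrix ι ι ℂ, (∀ i, IsSelfAdjoint (a i)) → FreeAlgebra.lift ℂ a P = 0)
    (b : X → Matrix ι ι ℂ) : FreeAlgebra.lift ℂ b P = 0 := by
  let B : X → Matrix ι ι (Polynomial ℂ) := fun i =>
    (ℜ (b i) : Matrix ι ι ℂ).map Polynomial.C +
      (Polynomial.X : Polynomial ℂ) • (ℑ (b i) : Matrix ι ι ℂ).map Polynomial.C
  have hB (t : ℂ) : FreeAlgebra.lift ℂ (fun i => (ℜ (b i) : Matrix ι ι ℂ) + t • ℑ (b i)) P =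
      (Polynomial.aeval t).mapMatrix (FreeAlgebra.lift ℂ B P) := by
    rw [AlgHom.apply_lift]
    refine congrArg (FreeAlgebra.lift ℂ · P) (funext fun i => ?_)
    ext p q
    simp only [Function.comp_apply, AlgHom.mapMatrix_apply, B, Matrix.map_apply, Matrix.add_apply,
      Matrix.smul_apply, smul_eq_mul, map_add, map_mul, Polynomial.aeval_C, Polynomial.aeval_X,
      Algebra.algebraMap_self, RingHom.id_apply]
  have hzero : FreeAlgebra.lift ℂ B P = 0 := by
    refine Matrix.ext fun p q => Polynomial.eq_zero_of_forall_eval_ofReal fun t => ?_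
    have := congr_fun₂ (hB t) p q
    rw [hP _ fun i => (ℜ (b i)).2.add (IsSelfAdjoint.smul (Complex.conj_ofReal t) (ℑ (b i)).2)] at this
    simpa using this.symm
  have hI := hB Complex.I
  simp only [realPart_add_I_smul_imaginaryPart, hzero, map_zero] at hI
  exact hI

theorem lift_eq_zero_of_forall_complex {σ : Type} {P : FA X}
    (hP : ∀ a : X → Matrix ι ι ℂ, FreeAlgebra.lift ℂ a P = 0)
    (b : X → Matrix ι ι (MvPolynomial σ ℂ)) : FreeAlgebra.lift ℂ b P = 0 := by
  refine Matrix.ext fun p q => MvPolynomial.funext fun c => ?_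
  have := congr_fun₂ ((MvPolynomial.aeval c).mapMatrix.apply_lift b P) p q
  rw [hP] at this
  simpa using this

end Vanishing

theorem MvPolynomial.coeff_eq_zero_of_mem_supported {σ R : Type*} [CommSemiring R] {S : Set σ}
    {f : MvPolynomial σ R} (hf : f ∈ supported R S) {m : σ →₀ ℕ} {s : σ} (hs : s ∈ m.support)
    (hsS : s ∉ S) : coeff m f = 0 := by
  by_contra h
  exact hsS <| mem_supported.mp hf <| (mem_vars_iff_mem_support s).mpr ⟨m, mem_support_iff.mpr h, hs⟩

section Staircase

variable {X : Type} [DecidableEq X] {d k : ℕ}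

def suffixMonomial (j : ℕ) : Fin d →₀ ℕ :=
  Finsupp.equivFunOnFinite.symm fun s => if j ≤ (s : ℕ) then 1 else 0

theorem mem_support_suffixMonomial {j : ℕ} {s : Fin d} :
    s ∈ (suffixMonomial j).support ↔ j ≤ (s : ℕ) := by
  simp [suffixMonomial]

theorem suffixMonomial_eq_zero_iff {j : ℕ} : suffixMonomial (d := d) j = 0 ↔ d ≤ j := by
  constructor
  · intro h
    by_contra! hj
    simpa [h] using mem_support_suffixMonomial.mpr (le_refl (⟨j, hj⟩ : Fin d).val)
  · intro h
    ext s
    simp only [suffixMonomial, Finsupp.equivFunOnFinite_symm_apply_apply, Finsupp.coe_zero,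
      Pi.zero_apply, ite_eq_right_iff, one_ne_zero, imp_false, not_le]
    omega

theorem suffixMonomial_sub_single {j : ℕ} (hj : j < d) :
    suffixMonomial j - Finsupp.single ⟨j, hj⟩ 1 = suffixMonomial (d := d) (j + 1) := by
  ext s
  simp only [suffixMonomial, Finsupp.coe_tsub, Pi.sub_apply, Finsupp.single_apply,
    Finsupp.coe_equivFunOnFinite_symm, Fin.ext_iff]
  split_ifs <;> omega

variable (hd : d < 2 * k) (w : Fin d → X)

def stairRow (s : Fin d) : Fin k := ⟨s / 2, by omega⟩

def stairCol (s : Fin d) : Fin k := ⟨(s + 1) / 2, by omega⟩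

def staircase (i : X) : Matrix (Fin k) (Fin k) (MvPolynomial (Fin d) ℂ) :=
  ∑ s with w s = i, Matrix.single (stairRow hd s) (stairCol hd s) (MvPolynomial.X s)

theorem staircase_mul_apply (i : X) (M : Matrix (Fin k) (Fin k) (MvPolynomial (Fin d) ℂ))
    (p q : Fin k) : (staircase hd w i * M) p q =
      ∑ s, if w s = i ∧ stairRow hd s = p then MvPolynomial.X s * M (stairCol hd s) q else 0 := by
  rw [staircase, Finset.sum_mul, Matrix.sum_apply, Finset.sum_filter]
  refine Finset.sum_congr rfl fun s _ => ?_
  by_cases hp : stairRow hd s = p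
  · subst hp; simp
  · simp [hp, Matrix.single_mul_apply_of_ne _ _ _ _ _ (Ne.symm hp)]

theorem stairRow_le_stairCol (s : Fin d) : stairRow hd s ≤ stairCol hd s := by
  simp only [Fin.le_def, stairRow, stairCol]
  omega

theorem staircase_prod_apply_mem_supported (u : List X) (p q : Fin k) :
    (u.map (staircase hd w)).prod p q ∈ MvPolynomial.supported ℂ {s | p ≤ stairRow hd s} := by
  induction u generalizing p with
  | nil =>
    rw [List.map_nil, List.prod_nil, Matrix.one_apply]
    split_ifs
    exacts [Subalgebra.one_mem _, Subalgebra.zero_mem _]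
  | cons i u ih =>
    rw [List.map_cons, List.prod_cons, staircase_mul_apply]
    refine Subalgebra.sum_mem _ fun s _ => ?_
    split_ifs with h
    · refine Subalgebra.mul_mem _ (MvPolynomial.X_mem_supported.mpr h.2.ge) ?_
      refine MvPolynomial.supported_mono (fun t ht => ?_) (ih (stairCol hd s))
      exact h.2 ▸ (stairRow_le_stairCol hd s).trans ht
    · exact Subalgebra.zero_mem _

/-- A step `s ≠ j` leaving row `j / 2` lands in a column past the row of step `j`; as rows never
decrease along the path, the variable `X j` can then no longer be picked up. -/
theorem coeff_suffixMonomial_X_mul_staircase_prod_eq_zero (u : List X) (q : Fin k) {j : ℕ}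
    {s : Fin d} (hs : (s : ℕ) ≠ j) (hrow : (stairRow hd s : ℕ) = j / 2) :
    MvPolynomial.coeff (suffixMonomial j)
      (MvPolynomial.X s * (u.map (staircase hd w)).prod (stairCol hd s) q) = 0 := by
  rw [MvPolynomial.coeff_X_mul']
  split_ifs with hjs
  · rw [mem_support_suffixMonomial] at hjs
    have hj : j < d := by omega
    refine MvPolynomial.coeff_eq_zero_of_mem_supported
      (staircase_prod_apply_mem_supported hd w u _ q) (s := ⟨j, hj⟩) ?_ ?_
    · simp [suffixMonomial, Fin.ext_iff, Ne.symm hs]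
    · simp only [stairRow, stairCol, Set.mem_ofPred_eq, Fin.le_def] at hrow ⊢
      omega
  · rfl

theorem coeff_suffixMonomial_staircase_prod (u : List X) {j : ℕ} (hj : j ≤ d) {p q : Fin k}
    (hp : (p : ℕ) = j / 2) (hq : (q : ℕ) = d / 2) :
    MvPolynomial.coeff (suffixMonomial j) ((u.map (staircase hd w)).prod p q) =
      if u = (List.ofFn w).drop j then 1 else 0 := by
  induction u generalizing j p with
  | nil =>
    rcases hj.lt_or_eq with hj | rfl
    · have hdrop : (List.ofFn w).drop j ≠ [] := by
        simpa only [ne_eq, List.drop_eq_nil_iff, List.length_ofFn, not_le] using hj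
      have hsuffix : suffixMonomial (d := d) j ≠ 0 := by rw [Ne, suffixMonomial_eq_zero_iff]; omega
      rw [if_neg hdrop.symm, List.map_nil, List.prod_nil, Matrix.one_apply]
      split_ifs <;> simp [MvPolynomial.coeff_one, hsuffix.symm]
    · have hpq : p = q := Fin.ext (hp.trans hq.symm)
      simp [hpq, MvPolynomial.coeff_one, suffixMonomial_eq_zero_iff.mpr le_rfl]
  | cons i u ih =>
    rw [List.map_cons, List.prod_cons, staircase_mul_apply, MvPolynomial.coeff_sum]
    rcases hj.lt_or_eq with hj | rfl
    · set s₀ : Fin d := ⟨j, hj⟩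
      rw [Finset.sum_eq_single s₀ ?_ (fun h => absurd (Finset.mem_univ _) h)]
      · have hrow : stairRow hd s₀ = p := Fin.ext hp.symm
        have hdrop : (List.ofFn w).drop j = w s₀ :: (List.ofFn w).drop (j + 1) := by
          rw [List.drop_eq_getElem_cons (by simpa), List.getElem_ofFn]
        simp only [hdrop, List.cons.injEq, hrow, and_true]
        by_cases hw : w s₀ = i
        · rw [if_pos hw, MvPolynomial.coeff_X_mul',
            if_pos (mem_support_suffixMonomial (s := s₀) |>.mpr le_rfl), suffixMonomial_sub_single hj,
            ih (by omega) rfl]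
          simp [hw, s₀]
        · rw [if_neg hw, MvPolynomial.coeff_zero, if_neg]
          rintro ⟨rfl, -⟩
          exact hw rfl
      · intro s _ hs
        split_ifs with h
        · exact coeff_suffixMonomial_X_mul_staircase_prod_eq_zero hd w u q
            (fun h => hs (Fin.ext h)) (by rw [h.2, hp])
        · exact MvPolynomial.coeff_zero _
    · rw [List.drop_of_length_le (by simp), if_neg (List.cons_ne_nil _ _)]
      refine Finset.sum_eq_zero fun s _ => ?_
      split_ifs
      · rw [MvPolynomial.coeff_X_mul', if_neg (mt mem_support_suffixMonomial.mp (by omega))]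
      · exact MvPolynomial.coeff_zero _

theorem coeff_suffixMonomial_lift_staircase (P : FA X) {p q : Fin k} (hp : (p : ℕ) = 0)
    (hq : (q : ℕ) = d / 2) :
    MvPolynomial.coeff (suffixMonomial 0) (FreeAlgebra.lift ℂ (staircase hd w) P p q) =
      coefficient P (FreeMonoid.ofList (List.ofFn w)) := by
  rw [lift_eq_sum_coefficient, Finsupp.sum, Matrix.sum_apply, MvPolynomial.coeff_sum]
  have hword (u : FreeMonoid X) := coeff_suffixMonomial_staircase_prod hd w u.toList (j := 0)
    (Nat.zero_le _) hp hq
  simp only [Matrix.smul_apply, MvPolynomial.coeff_smul, FreeMonoid.lift_apply, hword,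
    List.drop_zero, smul_eq_mul, mul_ite, mul_one, mul_zero]
  rw [Finset.sum_eq_single (FreeMonoid.ofList (List.ofFn w))]
  · simp
  · intro u _ hu
    rw [if_neg fun h => hu (by rw [← h, FreeMonoid.ofList_toList])]
  · intro h
    simp [Finsupp.notMem_support_iff.mp h]

end Staircase

theorem two_mul_le_length_of_mem_support {X : Type} {k : ℕ} {P : FA X}
    (hP : ∀ a : X → Matrix (Fin k) (Fin k) ℂ, FreeAlgebra.lift ℂ a P = 0) {w : FreeMonoid X}
    (hw : w ∈ (coefficient P).support) : 2 * k ≤ w.length := by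
  classical
  by_contra! hd
  replace hd : w.toList.length < 2 * k := hd
  have hcoeff := coeff_suffixMonomial_lift_staircase hd w.toList.get P (p := ⟨0, by omega⟩)
    (q := ⟨w.toList.length / 2, by omega⟩) rfl rfl
  rw [lift_eq_zero_of_forall_complex hP, List.ofFn_get, FreeMonoid.ofList_toList] at hcoeff
  exact Finsupp.mem_support_iff.mp hw (by simpa using hcoeff.symm)

theorem coefficient_homPart {X : Type} (d : ℕ) (P : FA X) :
    coefficient (homPart d P) = (coefficient P).filter fun w => w.length = d := by
  simp [coefficient, homPart]

theorem Jset_min_degree_general (n : ℕ) (k : ℕ)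
    (P : FA (Fin n)) (hP : P ∈ Jset (Fin n) k) :
    (∀ d : ℕ, homPart d P ≠ 0 → 2 * k ≤ d) ∧
    (P ≠ 0 → ∀ m : ℕ, P ∈ degLE (Fin n) m → 2 * k ≤ m) := by
  have hlen : ∀ w ∈ (coefficient P).support, 2 * k ≤ w.length :=
    fun w => two_mul_le_length_of_mem_support (lift_eq_zero_of_forall_isSelfAdjoint hP)
  refine ⟨fun d hd => ?_, fun hP0 m hm => ?_⟩
  · obtain ⟨w, hw⟩ : ((coefficient P).filter fun w => w.length = d).support.Nonempty := by
      rwa [Finsupp.support_nonempty_iff, ← coefficient_homPart, Ne, coefficient_eq_zero_iff]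
    rw [Finsupp.support_filter, Finset.mem_filter] at hw
    exact hw.2 ▸ hlen w hw.1
  · obtain ⟨w, hw⟩ : (coefficient P).support.Nonempty := by
      rwa [Finsupp.support_nonempty_iff, Ne, coefficient_eq_zero_iff]
    exact (hlen w hw).trans (hm w hw)

/-- If `P ∈ J_k` (`k ≥ 1`), then every nonzero homogeneous part
of `P` has degree at least `2k`; in particular every nonzero element of `J_k` has
degree at least `2k`. -/
theorem Jset_min_degree (n : ℕ) (k : ℕ) (hk : 1 ≤ k)
    (P : FA (Fin n)) (hP : P ∈ Jset (Fin n) k) :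
    (∀ d : ℕ, homPart d P ≠ 0 → 2 * k ≤ d) ∧
    (P ≠ 0 → ∀ m : ℕ, P ∈ degLE (Fin n) m → 2 * k ≤ m) :=
  Jset_min_degree_general n k P hP
end
end
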